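/- arXiv:math/0507573 — 11 statements merged into one kernel-verified Lean document; each statement's English description precedes it below -/
import Mathlib

section
/- For every integer k ≥ 2 and every integer t ≥ 1, the strict asymptotic density with respect to the sup-norm of the set U_t of t-visible points in ℤ^k equals 1/(t^k · ζ(k)). That is, lim_{n→∞} #{z ∈ ℤ^k : ‖z‖_∞ ≤ n and gcd of the coordinates of z equals t} / #{z ∈ ℤ^k : ‖z‖_∞ ≤ n} = 1/(t^k ζ(k)). -/
/-!
A nonzero point `z` of the box `‖z‖_∞ ≤ n` has `gcd z = t` iff `∑_{d : td ∣ gcd z} μ(d) = 1`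
(otherwise the sum is `0`), and the nonzero points all of whose coordinates are divisible by `q`
number `(2⌊n/q⌋ + 1)^k - 1`. Hence the number of `t`-visible points of the box is
`∑_{d ≤ n} μ(d) ((2⌊n/(td)⌋ + 1)^k - 1)`. Divided by `(2n + 1)^k`, the `d`-th term tends to
`μ(d) / (td)^k` and is bounded by `(2/(td))^k`, which is summable for `k ≥ 2`, so dominated
convergence gives the limit `t⁻ᵏ ∑ μ(d) / dᵏ = 1 / (tᵏ ζ(k))`, the last identity being
`L(1, s) L(μ, s) = 1`.
-/

open Filter Finset ArithmeticFunction Topology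
open scoped ArithmeticFunction.Moebius

namespace DensityVisible

variable {k n : ℕ}

noncomputable def box (k n : ℕ) : Finset (Fin k → ℤ) := Fintype.piFinset fun _ => Icc (-(n : ℤ)) n

lemma mem_box {z : Fin k → ℤ} : z ∈ box k n ↔ ∀ i, |z i| ≤ n := by
  simp [box, abs_le]

lemma mem_box_iff_natAbs_le {z : Fin k → ℤ} : z ∈ box k n ↔ ∀ i, (z i).natAbs ≤ n := by
  simp only [mem_box, Int.abs_eq_natAbs, Nat.cast_le]

lemma card_box : #(box k n) = (2 * n + 1) ^ k := by
  simp only [box, Fintype.card_piFinset, Int.card_Icc, prod_const, card_univ, Fintype.card_fin]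
  congr 1
  omega

lemma image_smul_box {q : ℕ} (hq : 0 < q) :
    (box k (n / q)).image ((q : ℤ) • ·) = {z ∈ box k n | ∀ i, (q : ℤ) ∣ z i} := by
  ext z
  simp only [mem_image, mem_filter, mem_box_iff_natAbs_le]
  constructor
  · rintro ⟨w, hw, rfl⟩
    refine ⟨fun i => ?_, fun i => dvd_mul_right _ _⟩
    simpa [Int.natAbs_mul, mul_comm] using (Nat.le_div_iff_mul_le hq).1 (hw i)
  · rintro ⟨hz, hdvd⟩
    choose w hw using hdvd
    refine ⟨w, fun i => ?_, funext fun i => (hw i).symm⟩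
    rw [Nat.le_div_iff_mul_le hq, mul_comm]
    simpa [hw i, Int.natAbs_mul] using hz i

lemma card_box_filter_dvd {q : ℕ} (hq : 0 < q) :
    #{z ∈ box k n | ∀ i, (q : ℤ) ∣ z i} = (2 * (n / q) + 1) ^ k := by
  rw [← image_smul_box hq, card_image_of_injective _ (smul_right_injective _ (by positivity)),
    card_box]

def coordGcd (z : Fin k → ℤ) : ℕ := univ.gcd fun i => (z i).natAbs

lemma dvd_coordGcd_iff {d : ℕ} {z : Fin k → ℤ} : d ∣ coordGcd z ↔ ∀ i, (d : ℤ) ∣ z i := by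
  simp [coordGcd, Finset.dvd_gcd_iff, Int.natCast_dvd]

lemma coordGcd_eq_zero_iff {z : Fin k → ℤ} : coordGcd z = 0 ↔ z = 0 := by
  simp [coordGcd, Finset.gcd_eq_zero_iff, funext_iff]

lemma coordGcd_le_of_mem_box {z : Fin k → ℤ} (hz : z ≠ 0) (h : z ∈ box k n) :
    coordGcd z ≤ n := by
  obtain ⟨i, hi⟩ := Function.ne_iff.1 hz
  calc coordGcd z ≤ (z i).natAbs :=
        Nat.le_of_dvd (Int.natAbs_pos.2 hi) (Finset.gcd_dvd (mem_univ i))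
    _ ≤ n := mem_box_iff_natAbs_le.1 h i

noncomputable def visiblePoints (k t n : ℕ) : Finset (Fin k → ℤ) :=
  {z ∈ box k n | z ≠ 0 ∧ coordGcd z = t}

lemma sum_moebius_divisors (g : ℕ) : ∑ d ∈ g.divisors, μ d = if g = 1 then 1 else 0 := by
  rw [← coe_mul_zeta_apply, moebius_mul_coe_zeta, one_apply]

lemma sum_moebius_filter_mul_dvd {t g : ℕ} (ht : 0 < t) (hg : 0 < g) (hgn : g ≤ n) :
    ∑ d ∈ Icc 1 n with t * d ∣ g, μ d = if g = t then 1 else 0 := by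
  by_cases htg : t ∣ g
  · obtain ⟨g, rfl⟩ := htg
    have hdivisors : {d ∈ Icc 1 n | t * d ∣ t * g} = g.divisors := by
      ext d
      simp only [mem_filter, mem_Icc, Nat.mem_divisors, Nat.mul_dvd_mul_iff_left ht]
      constructor
      · rintro ⟨-, hd⟩
        exact ⟨hd, by rintro rfl; simp at hg⟩
      · rintro ⟨hd, hg0⟩
        have hdg := Nat.le_of_dvd (Nat.pos_of_ne_zero hg0) hd
        exact ⟨⟨Nat.pos_of_dvd_of_pos hd (Nat.pos_of_ne_zero hg0),
          hdg.trans ((Nat.le_mul_of_pos_left g ht).trans hgn)⟩, hd⟩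
    simp only [hdivisors, sum_moebius_divisors, Nat.mul_eq_left ht.ne']
  · rw [if_neg (by rintro rfl; exact htg dvd_rfl), sum_eq_zero]
    intro d hd
    exact absurd (dvd_of_mul_right_dvd (mem_filter.1 hd).2) htg

lemma card_box_filter_ne_zero_dvd {q : ℕ} (hq : 0 < q) :
    (#{z ∈ box k n | z ≠ 0 ∧ q ∣ coordGcd z} : ℤ) = (2 * (n / q) + 1 : ℕ) ^ k - 1 := by
  have hzero : (0 : Fin k → ℤ) ∈ {z ∈ box k n | ∀ i, (q : ℤ) ∣ z i} := by
    simp [mem_box]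
  have herase : {z ∈ box k n | z ≠ 0 ∧ q ∣ coordGcd z} =
      ({z ∈ box k n | ∀ i, (q : ℤ) ∣ z i}).erase 0 := by
    ext z
    simp only [mem_filter, mem_erase, dvd_coordGcd_iff]
    tauto
  rw [herase, card_erase_of_mem hzero, card_box_filter_dvd hq, Nat.cast_sub, Nat.cast_pow]
  · simp
  · exact Nat.one_le_pow _ _ (by omega)

lemma card_visiblePoints_eq_sum_moebius {t : ℕ} (ht : 0 < t) :
    (#(visiblePoints k t n) : ℤ) =
      ∑ d ∈ Icc 1 n, μ d * (((2 * (n / (t * d)) + 1 : ℕ) : ℤ) ^ k - 1) := by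
  set B := {z ∈ box k n | z ≠ 0}
  calc (#(visiblePoints k t n) : ℤ)
      = ∑ z ∈ B, ∑ d ∈ Icc 1 n with t * d ∣ coordGcd z, μ d := by
        rw [visiblePoints, ← filter_filter, card_filter, Nat.cast_sum]
        refine sum_congr rfl fun z hz => ?_
        obtain ⟨hbox, hz0⟩ := mem_filter.1 hz
        rw [sum_moebius_filter_mul_dvd ht (Nat.pos_of_ne_zero (coordGcd_eq_zero_iff.not.2 hz0))
          (coordGcd_le_of_mem_box hz0 hbox), Nat.cast_ite, Nat.cast_one, Nat.cast_zero]
    _ = ∑ d ∈ Icc 1 n, μ d * #{z ∈ B | t * d ∣ coordGcd z} := by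
        simp_rw [sum_filter]
        rw [sum_comm]
        refine sum_congr rfl fun d _ => ?_
        rw [card_filter, Nat.cast_sum, mul_sum]
        refine sum_congr rfl fun z _ => ?_
        split_ifs <;> simp
    _ = _ := by
        refine sum_congr rfl fun d hd => ?_
        have hd : 0 < d := (mem_Icc.1 hd).1
        rw [filter_filter, card_box_filter_ne_zero_dvd (by positivity)]

lemma abs_div_two_mul_add_one_sub_le (q : ℕ) :
    |((2 * (n / q) + 1 : ℕ) : ℝ) / (2 * n + 1) - 1 / q| ≤ 1 / (2 * n + 1) := by
  have hn : (0 : ℝ) < 2 * n + 1 := by positivity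
  rcases Nat.eq_zero_or_pos q with rfl | hq
  · simp [abs_of_pos hn]
  have hq' : (0 : ℝ) < q := by exact_mod_cast hq
  have hdiv : (n : ℝ) = q * (n / q : ℕ) + (n % q : ℕ) := by
    exact_mod_cast (Nat.div_add_mod n q).symm
  have hmod : ((n % q : ℕ) : ℝ) + 1 ≤ q := by exact_mod_cast Nat.mod_lt n hq
  have hdist : |(q : ℝ) * (2 * (n / q : ℕ) + 1) - (2 * n + 1)| ≤ q := by
    rw [abs_le]
    constructor <;> linarith [(Nat.cast_nonneg (n % q) : (0 : ℝ) ≤ _)]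
  calc |((2 * (n / q) + 1 : ℕ) : ℝ) / (2 * n + 1) - 1 / q|
      = |(q : ℝ) * (2 * (n / q : ℕ) + 1) - (2 * n + 1)| / (q * (2 * n + 1)) := by
        rw [← abs_of_pos (mul_pos hq' hn), ← abs_div]
        congr 1
        field_simp
        push_cast
        ring
    _ ≤ q / (q * (2 * n + 1)) := by gcongr
    _ = 1 / (2 * n + 1) := by field_simp

lemma div_two_mul_add_one_le {q : ℕ} (hq : 0 < q) (hqn : q ≤ n) :
    ((2 * (n / q) + 1 : ℕ) : ℝ) / (2 * n + 1) ≤ 2 / q := by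
  rw [div_le_div_iff₀ (by positivity) (by exact_mod_cast hq)]
  have := Nat.div_mul_le_self n q
  exact_mod_cast (by nlinarith : (2 * (n / q) + 1) * q ≤ 2 * (2 * n + 1))

lemma tendsto_one_div_two_mul_add_one :
    Tendsto (fun n : ℕ => 1 / (2 * (n : ℝ) + 1)) atTop (𝓝 0) := by
  simp only [one_div]
  exact tendsto_inv_atTop_zero.comp <| tendsto_atTop_add_const_right _ _ <|
    tendsto_natCast_atTop_atTop.const_mul_atTop two_pos

lemma tendsto_div_two_mul_add_one (q : ℕ) :
    Tendsto (fun n : ℕ => ((2 * (n / q) + 1 : ℕ) : ℝ) / (2 * n + 1)) atTop (𝓝 (1 / q)) :=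
  tendsto_iff_norm_sub_tendsto_zero.2 <|
    squeeze_zero (fun _ => norm_nonneg _) (fun _ => abs_div_two_mul_add_one_sub_le q)
      tendsto_one_div_two_mul_add_one

noncomputable def moebiusTerm (k t n d : ℕ) : ℝ :=
  μ d * (((2 * (n / (t * d)) + 1 : ℕ) : ℝ) ^ k - 1) / (2 * n + 1) ^ k

lemma moebiusTerm_eq (t d : ℕ) : moebiusTerm k t n d =
    μ d * ((((2 * (n / (t * d)) + 1 : ℕ) : ℝ) / (2 * n + 1)) ^ k - (1 / (2 * n + 1)) ^ k) := by
  rw [moebiusTerm, div_pow, div_pow, one_pow, ← sub_div, mul_div_assoc]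

lemma moebiusTerm_eq_zero_of_notMem {t d : ℕ} (ht : 0 < t) (hd : d ∉ Icc 1 n) :
    moebiusTerm k t n d = 0 := by
  rcases Nat.eq_zero_or_pos d with rfl | hd0
  · simp [moebiusTerm]
  have : n / (t * d) = 0 := Nat.div_eq_of_lt <| by
    simp only [mem_Icc, not_and, not_le] at hd
    nlinarith [hd hd0]
  simp [moebiusTerm, this]

lemma card_visiblePoints_div_eq_tsum {t : ℕ} (ht : 0 < t) :
    (#(visiblePoints k t n) : ℝ) / (2 * n + 1) ^ k = ∑' d, moebiusTerm k t n d := by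
  rw [tsum_eq_sum fun d hd => moebiusTerm_eq_zero_of_notMem ht hd]
  have := congrArg (Int.cast : ℤ → ℝ) (card_visiblePoints_eq_sum_moebius (k := k) (n := n) ht)
  simp only [Int.cast_sum, Int.cast_mul, Int.cast_sub, Int.cast_pow, Int.cast_natCast,
    Int.cast_one] at this
  rw [this, sum_div]
  rfl

lemma tendsto_moebiusTerm (hk : k ≠ 0) (t d : ℕ) :
    Tendsto (fun n => moebiusTerm k t n d) atTop (𝓝 (μ d / ((t : ℝ) * d) ^ k)) := by
  simp only [moebiusTerm_eq]
  convert ((tendsto_div_two_mul_add_one (t * d)).pow k).sub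
    (tendsto_one_div_two_mul_add_one.pow k) |>.const_mul (μ d : ℝ) using 2
  rw [zero_pow hk, sub_zero, div_pow, one_pow, mul_one_div, Nat.cast_mul]

lemma abs_moebiusTerm_le (t d : ℕ) : |moebiusTerm k t n d| ≤ (2 / ((t : ℝ) * d)) ^ k := by
  by_cases h0 : n / (t * d) = 0
  · simp only [moebiusTerm, h0, mul_zero, zero_add, Nat.cast_one, one_pow, sub_self, zero_div,
      abs_zero]
    positivity
  obtain ⟨hq, hqn⟩ := Nat.div_ne_zero_iff.1 h0
  have hs : (0 : ℝ) ≤ 1 / (2 * n + 1) := by positivity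
  have hsr : 1 / (2 * (n : ℝ) + 1) ≤ ((2 * (n / (t * d)) + 1 : ℕ) : ℝ) / (2 * n + 1) := by
    gcongr
    exact_mod_cast Nat.le_add_left 1 _
  have hr := div_two_mul_add_one_le (Nat.pos_of_ne_zero hq) hqn
  rw [Nat.cast_mul] at hr
  set r : ℝ := ((2 * (n / (t * d)) + 1 : ℕ) : ℝ) / (2 * n + 1)
  rw [moebiusTerm_eq, abs_mul]
  calc |(μ d : ℝ)| * |r ^ k - (1 / (2 * n + 1)) ^ k| ≤ 1 * r ^ k := by
        gcongr
        · exact_mod_cast abs_moebius_le_one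
        · rw [abs_of_nonneg (sub_nonneg.2 (by gcongr))]
          linarith [pow_nonneg hs k]
    _ ≤ (2 / ((t : ℝ) * d)) ^ k := by
        rw [one_mul]
        gcongr

lemma summable_two_div_mul_pow (hk : 1 < k) (t : ℕ) :
    Summable fun d : ℕ => (2 / ((t : ℝ) * d)) ^ k := by
  refine ((Real.summable_one_div_nat_pow.2 hk).mul_left ((2 / (t : ℝ)) ^ k)).congr fun d => ?_
  rw [← one_div_pow, ← mul_pow, div_mul_div_comm, mul_one]

lemma LSeries_ofReal_eq_ofReal_tsum (f : ℕ → ℝ) (hk : k ≠ 0) :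
    LSeries (fun n => f n) k = ((∑' n : ℕ, f n / (n : ℝ) ^ k : ℝ) : ℂ) := by
  rw [LSeries, Complex.ofReal_tsum]
  refine tsum_congr fun n => ?_
  rcases eq_or_ne n 0 with rfl | hn
  · simp [zero_pow hk]
  · rw [LSeries.term_of_ne_zero hn, Complex.cpow_natCast]
    push_cast
    rfl

lemma tsum_moebius_div_pow (hk : 1 < k) :
    ∑' d : ℕ, (μ d : ℝ) / (d : ℝ) ^ k = (∑' n : ℕ+, (1 : ℝ) / (n : ℝ) ^ k)⁻¹ := by
  have hk0 : k ≠ 0 := by omega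
  have h := LSeries_one_mul_Lseries_moebius (s := k) (by simpa using hk)
  rw [show (1 : ℕ → ℂ) = fun n => ((1 : ℝ) : ℂ) from rfl, LSeries_ofReal_eq_ofReal_tsum _ hk0,
    show (fun n => ((μ n : ℤ) : ℂ)) = fun n => (((μ n : ℝ)) : ℂ) by simp,
    LSeries_ofReal_eq_ofReal_tsum _ hk0,
    ← tsum_zero_pnat_eq_tsum_nat (Real.summable_one_div_nat_pow.2 hk)] at h
  simp only [← Complex.ofReal_mul, Complex.ofReal_eq_one] at h
  exact eq_inv_of_mul_eq_one_right (by simpa [zero_pow hk0] using h)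

end DensityVisible

open DensityVisible in
theorem density_t_visible (k t : ℕ) (hk : 2 ≤ k) (ht : 1 ≤ t) :
    Tendsto (fun n : ℕ =>
        (Nat.card {z : Fin k → ℤ // (∀ i, |z i| ≤ (n : ℤ)) ∧ z ≠ 0 ∧
            Finset.univ.gcd (fun i => (z i).natAbs) = t} : ℝ) /
        (Nat.card {z : Fin k → ℤ // ∀ i, |z i| ≤ (n : ℤ)} : ℝ))
      atTop (nhds (1 / ((t : ℝ) ^ k * (∑' n : ℕ+, (1 : ℝ) / (n : ℝ) ^ k)))) := by
  have hcard (n : ℕ) : Nat.card {z : Fin k → ℤ // ∀ i, |z i| ≤ (n : ℤ)} = (2 * n + 1) ^ k :=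
    (Nat.card_congr (Equiv.subtypeEquivRight fun _ => mem_box.symm)).trans
      ((Nat.card_eq_finsetCard _).trans card_box)
  have hnum (n : ℕ) : Nat.card {z : Fin k → ℤ // (∀ i, |z i| ≤ (n : ℤ)) ∧ z ≠ 0 ∧
      Finset.univ.gcd (fun i => (z i).natAbs) = t} = #(visiblePoints k t n) :=
    (Nat.card_congr (Equiv.subtypeEquivRight fun _ => by
      rw [visiblePoints, mem_filter, mem_box]; rfl)).trans (Nat.card_eq_finsetCard _)
  have hlim := tendsto_tsum_of_dominated_convergence (summable_two_div_mul_pow hk t)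
    (tendsto_moebiusTerm (by omega) t) (.of_forall fun _ d => abs_moebiusTerm_le t d)
  have hval : ∑' d : ℕ, (μ d : ℝ) / ((t : ℝ) * d) ^ k =
      1 / ((t : ℝ) ^ k * ∑' n : ℕ+, (1 : ℝ) / (n : ℝ) ^ k) := by
    simp_rw [mul_pow, div_mul_eq_div_div_swap, tsum_div_const, tsum_moebius_div_pow hk]
    ring
  refine hval ▸ hlim.congr fun n => ?_
  rw [hnum, hcard, ← card_visiblePoints_div_eq_tsum ht]
  push_cast
  rfl
end

section
/- The strict asymptotic density (with respect to the sup-norm) of the set of visible points in ℤ^2 — nonzero points whose two coordinates are coprime — equals 6/π², i.e. lim_{n→∞} #{(x,y) ∈ ℤ² : max(|x|,|y|) ≤ n, gcd(x,y)=1} / (2n+1)² = 6/π². -/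
open Filter

/-!
Möbius inversion turns the indicator of `gcd = 1` into `∑_{d ∣ gcd} μ d`, so the number of visible
points in the square `[-n, n]²` is `∑_{d ≤ n} μ d ((2⌊n/d⌋ + 1)² - 1)`, the `d`-th count being that
of the nonzero points of the square with both coordinates divisible by `d`. After division by
`(2n + 1)²` the `d`-th term tends to `μ d / d²` and is bounded by `2 / d²` uniformly in `n`, so by
dominated convergence the density is `∑ μ d / d² = 1 / ζ(2) = 6 / π²`.
-/

open ArithmeticFunction Finset Topology
open scoped ArithmeticFunction.Moebius

lemma tsum_moebius_div_sq : ∑' d : ℕ, (μ d : ℝ) / d ^ 2 = 6 / Real.pi ^ 2 := by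
  have hs : 1 < (2 : ℂ).re := by norm_num
  have hL : LSeries (fun d ↦ μ d) 2 = 6 / Real.pi ^ 2 := by
    have h := LSeries_zeta_mul_Lseries_moebius hs
    rw [LSeries_zeta_eq_riemannZeta hs, riemannZeta_two] at h
    rw [eq_inv_of_mul_eq_one_right h, inv_div]
  apply Complex.ofReal_injective
  rw [Complex.ofReal_tsum]
  push_cast
  rw [← hL, LSeries]
  refine tsum_congr fun d ↦ ?_
  rcases eq_or_ne d 0 with rfl | hd
  · simp
  · rw [LSeries.term_of_ne_zero hd, Complex.cpow_ofNat]

lemma card_filter_dvd_Icc_neg (n : ℕ) {d : ℕ} (hd : 0 < d) :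
    #{x ∈ Icc (-n : ℤ) n | (d : ℤ) ∣ x} = 2 * (n / d) + 1 := by
  have hd' : (0 : ℤ) < d := by exact_mod_cast hd
  have himage : {x ∈ Icc (-n : ℤ) n | (d : ℤ) ∣ x} =
      (Icc (-((n / d : ℕ) : ℤ)) (n / d : ℕ)).image (· * (d : ℤ)) := by
    ext x
    simp only [mem_filter, mem_Icc, mem_image, Int.natCast_div, neg_le, Int.le_ediv_iff_mul_le hd']
    constructor
    · rintro ⟨hx, k, rfl⟩
      exact ⟨k, by constructor <;> linarith, mul_comm _ _⟩
    · rintro ⟨k, hk, rfl⟩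
      exact ⟨by constructor <;> linarith, dvd_mul_left _ _⟩
  rw [himage, card_image_of_injective _ (mul_left_injective₀ hd'.ne'), Int.card_Icc]
  omega

noncomputable def squareBox (n : ℕ) : Finset (ℤ × ℤ) := Icc (-n : ℤ) n ×ˢ Icc (-n : ℤ) n

lemma card_filter_dvd_gcd_squareBox (n : ℕ) {d : ℕ} (hd : 0 < d) :
    #{p ∈ squareBox n | d ∣ Int.gcd p.1 p.2} = (2 * (n / d) + 1) ^ 2 := by
  simp only [squareBox, Int.dvd_gcd_iff, filter_product, card_product,
    card_filter_dvd_Icc_neg n hd, sq]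

lemma gcd_le_of_mem_squareBox {n : ℕ} {p : ℤ × ℤ} (hp : p ∈ squareBox n) (hp0 : p ≠ 0) :
    Int.gcd p.1 p.2 ≤ n := by
  simp only [squareBox, mem_product, mem_Icc] at hp
  by_cases h1 : p.1 = 0
  · have h2 : p.2 ≠ 0 := fun h2 ↦ hp0 (Prod.ext h1 h2)
    exact (Int.gcd_le_natAbs_right _ h2).trans (by omega)
  · exact (Int.gcd_le_natAbs_left _ h1).trans (by omega)

lemma sum_moebius_filter_dvd_Icc {g n : ℕ} (hg : g ≠ 0) (hgn : g ≤ n) :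
    ∑ d ∈ Icc 1 n with d ∣ g, (μ d : ℤ) = if g = 1 then 1 else 0 := by
  have hdivisors : {d ∈ Icc 1 n | d ∣ g} = g.divisors := by
    ext d
    simp only [mem_filter, mem_Icc, Nat.mem_divisors]
    constructor
    · rintro ⟨-, hd⟩
      exact ⟨hd, hg⟩
    · rintro ⟨hd, -⟩
      exact ⟨⟨Nat.pos_of_dvd_of_pos hd (Nat.pos_of_ne_zero hg),
        (Nat.le_of_dvd (Nat.pos_of_ne_zero hg) hd).trans hgn⟩, hd⟩
  rw [hdivisors, ← coe_mul_zeta_apply, moebius_mul_coe_zeta, one_apply]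

lemma card_visible_squareBox_eq_sum_moebius (n : ℕ) :
    (#{p ∈ squareBox n | Int.gcd p.1 p.2 = 1} : ℤ) =
      ∑ d ∈ Icc 1 n, μ d * ((2 * (n / d : ℕ) + 1 : ℤ) ^ 2 - 1) := by
  set S := (squareBox n).erase 0 with hS
  have h0 : (0 : ℤ × ℤ) ∈ squareBox n := by simp [squareBox]
  calc (#{p ∈ squareBox n | Int.gcd p.1 p.2 = 1} : ℤ)
      = ∑ p ∈ S, if Int.gcd p.1 p.2 = 1 then 1 else 0 := by
        rw [← natCast_card_filter, hS, filter_erase, erase_eq_of_notMem (by simp)]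
    _ = ∑ p ∈ S, ∑ d ∈ Icc 1 n with d ∣ Int.gcd p.1 p.2, (μ d : ℤ) := by
        refine sum_congr rfl fun p hp ↦ ?_
        obtain ⟨hp0, hp⟩ := mem_erase.mp hp
        have hg : Int.gcd p.1 p.2 ≠ 0 := fun h ↦
          hp0 (Prod.ext (Int.gcd_eq_zero_iff.mp h).1 (Int.gcd_eq_zero_iff.mp h).2)
        rw [sum_moebius_filter_dvd_Icc hg (gcd_le_of_mem_squareBox hp hp0)]
    _ = ∑ d ∈ Icc 1 n, ∑ p ∈ S with d ∣ Int.gcd p.1 p.2, (μ d : ℤ) := by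
        simp only [sum_filter]
        exact sum_comm
    _ = ∑ d ∈ Icc 1 n, μ d * ((2 * (n / d : ℕ) + 1 : ℤ) ^ 2 - 1) := by
        refine sum_congr rfl fun d hd ↦ ?_
        rw [sum_const, filter_erase, card_erase_of_mem (by simp [h0]),
          card_filter_dvd_gcd_squareBox n (mem_Icc.mp hd).1, nsmul_eq_mul,
          Nat.cast_sub (Nat.one_le_pow _ _ (Nat.succ_pos _))]
        push_cast
        ring

/-- The proportion of the square `[-n, n]²` taken by its nonzero points with both coordinates
divisible by `d`. -/
noncomputable def multiplesRatio (n d : ℕ) : ℝ :=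
  ((2 * (n / d : ℕ) + 1 : ℝ) ^ 2 - 1) / (2 * n + 1) ^ 2

lemma multiplesRatio_eq_zero_of_lt {n d : ℕ} (h : n < d) : multiplesRatio n d = 0 := by
  simp [multiplesRatio, Nat.div_eq_of_lt h]

lemma multiplesRatio_nonneg (n d : ℕ) : 0 ≤ multiplesRatio n d := by
  have h1 : (1 : ℝ) ≤ 2 * (n / d : ℕ) + 1 := by linarith [(n / d).cast_nonneg (α := ℝ)]
  have h2 : (0 : ℝ) ≤ (2 * (n / d : ℕ) + 1) ^ 2 - 1 := by linarith [one_le_pow₀ (n := 2) h1]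
  unfold multiplesRatio
  positivity

lemma multiplesRatio_le (n d : ℕ) : multiplesRatio n d ≤ 2 / d ^ 2 := by
  rcases d.eq_zero_or_pos with rfl | hd
  · simp [multiplesRatio]
  have hq : ((n / d : ℕ) : ℝ) ≤ (n / d : ℕ) ^ 2 := by
    exact_mod_cast Nat.le_self_pow two_ne_zero _
  have hqd : ((n / d : ℕ) : ℝ) * d ≤ n := by exact_mod_cast Nat.div_mul_le_self n d
  unfold multiplesRatio
  rw [div_le_div_iff₀ (by positivity) (by positivity)]
  nlinarith [mul_le_mul hqd hqd (by positivity) (Nat.cast_nonneg n)]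

lemma abs_two_mul_div_add_one_div_sub_inv_le (n : ℕ) {d : ℕ} (hd : 0 < d) :
    |(2 * (n / d : ℕ) + 1 : ℝ) / (2 * n + 1) - 1 / d| ≤ 1 / (2 * n + 1) := by
  have hdiv : ((n / d : ℕ) : ℝ) * d + (n % d : ℕ) = n := by exact_mod_cast Nat.div_add_mod' n d
  have hmod : ((n % d : ℕ) : ℝ) + 1 ≤ d := by exact_mod_cast Nat.mod_lt n hd
  have hmod0 : (0 : ℝ) ≤ (n % d : ℕ) := Nat.cast_nonneg _
  have hd' : (0 : ℝ) < d := by exact_mod_cast hd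
  have hsub : (2 * (n / d : ℕ) + 1 : ℝ) / (2 * n + 1) - 1 / d
      = (d - 2 * (n % d : ℕ) - 1) / ((2 * n + 1) * d) := by
    field_simp
    linear_combination 2 * hdiv
  calc |(2 * (n / d : ℕ) + 1 : ℝ) / (2 * n + 1) - 1 / d|
      = |(d - 2 * (n % d : ℕ) - 1 : ℝ)| / ((2 * n + 1) * d) := by
        rw [hsub, abs_div, abs_of_pos (show (0 : ℝ) < (2 * n + 1) * d by positivity)]
    _ ≤ d / ((2 * n + 1) * d) := by
        gcongr
        rw [abs_le]
        constructor <;> linarith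
    _ = 1 / (2 * n + 1) := by field_simp

lemma tendsto_multiplesRatio (d : ℕ) :
    Tendsto (multiplesRatio · d) atTop (𝓝 (1 / d ^ 2)) := by
  rcases d.eq_zero_or_pos with rfl | hd
  · simp [multiplesRatio]
  have hinv : Tendsto (fun n : ℕ ↦ 1 / (2 * n + 1 : ℝ)) atTop (𝓝 0) :=
    tendsto_const_nhds.div_atTop <| tendsto_atTop_add_const_right _ _ <|
      tendsto_natCast_atTop_atTop.const_mul_atTop two_pos
  have hfrac : Tendsto (fun n : ℕ ↦ (2 * (n / d : ℕ) + 1 : ℝ) / (2 * n + 1)) atTop (𝓝 (1 / d)) :=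
    tendsto_iff_norm_sub_tendsto_zero.mpr <| squeeze_zero (fun _ ↦ norm_nonneg _)
      (fun n ↦ abs_two_mul_div_add_one_div_sub_inv_le n hd) hinv
  convert (hfrac.pow 2).sub (hinv.pow 2) using 1
  · ext n
    simp only [multiplesRatio]
    field_simp
  · simp

lemma natCard_visible_eq (n : ℕ) :
    Nat.card {p : ℤ × ℤ // |p.1| ≤ (n : ℤ) ∧ |p.2| ≤ (n : ℤ) ∧ Int.gcd p.1 p.2 = 1} =
      #{p ∈ squareBox n | Int.gcd p.1 p.2 = 1} := by
  rw [← Nat.card_eq_finsetCard]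
  exact Nat.card_congr <| Equiv.subtypeEquivRight fun p ↦ by
    simp [squareBox, abs_le, and_assoc]

lemma card_visible_squareBox_div_eq_tsum (n : ℕ) :
    (#{p ∈ squareBox n | Int.gcd p.1 p.2 = 1} : ℝ) / (2 * n + 1) ^ 2 =
      ∑' d, μ d * multiplesRatio n d := by
  rw [tsum_eq_sum (s := Icc 1 n), ← Int.cast_natCast, card_visible_squareBox_eq_sum_moebius n]
  · simp only [Int.cast_sum, Int.cast_mul, Int.cast_sub, Int.cast_pow, Int.cast_add,
      Int.cast_ofNat, Int.cast_natCast, Int.cast_one, multiplesRatio, sum_div, mul_div_assoc]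
  · intro d hd
    simp only [mem_Icc, not_and, not_le] at hd
    rcases d.eq_zero_or_pos with rfl | hd0
    · simp
    · rw [multiplesRatio_eq_zero_of_lt (hd hd0), mul_zero]

theorem density_visible_Z2 :
    Tendsto (fun n : ℕ =>
        (Nat.card {p : ℤ × ℤ // |p.1| ≤ (n : ℤ) ∧ |p.2| ≤ (n : ℤ) ∧
            Int.gcd p.1 p.2 = 1} : ℝ) / ((2 * (n : ℝ) + 1) ^ 2))
      atTop (nhds (6 / Real.pi ^ 2)) := by
  simp only [natCard_visible_eq, card_visible_squareBox_div_eq_tsum]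
  rw [← tsum_moebius_div_sq]
  refine tendsto_tsum_of_dominated_convergence (bound := fun d ↦ 2 / (d : ℝ) ^ 2) ?_ ?_ ?_
  · simpa [div_eq_mul_inv] using (Real.summable_one_div_nat_pow.mpr one_lt_two).mul_left 2
  · intro d
    simpa [div_eq_mul_inv] using (tendsto_multiplesRatio d).const_mul (μ d : ℝ)
  · refine .of_forall fun n d ↦ ?_
    have hμ : |(μ d : ℝ)| ≤ 1 := by exact_mod_cast abs_moebius_le_one
    rw [norm_mul, Real.norm_eq_abs, Real.norm_eq_abs, abs_of_nonneg (multiplesRatio_nonneg n d)]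
    exact (mul_le_of_le_one_left (multiplesRatio_nonneg n d) hμ).trans (multiplesRatio_le n d)
end

section
/- Let k ≥ 2 and let Y ⊆ ℤ^k be a nonempty SL(k,ℤ)-invariant subset not containing the origin. Then Y is the union of the sets U_t over t in the set I = {t ≥ 1 : Y contains some t-visible element}, where U_t is the set of all t-visible points of ℤ^k. -/
/-!
The gcd of the coordinates is an `SL(k, ℤ)`-invariant: every coordinate of `M z` is an integer
combination of those of `z`, and `M⁻¹` is again integral. Conversely, elementary transvections
perform Euclid's algorithm on the coordinates of a nonzero `z`, so for `k ≥ 2` they carry `z` to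
`gcd(z) • e₀` (they can also move a multiple of a basis vector to another position and flip its
sign). Hence the orbits of nonzero vectors are exactly the sets `U_t`, and an invariant set
avoiding `0` is the union of the orbits it meets.
-/

open Matrix MulAction

section Transvection

variable {ι R : Type*} [Fintype ι] [DecidableEq ι] [CommRing R]

lemma Matrix.SpecialLinearGroup.transvection_smul {i j : ι} (hij : i ≠ j) (c : R)
    (v : ι → R) : SpecialLinearGroup.transvection hij c • v = v + Pi.single i (c * v j) := by
  rw [SpecialLinearGroup.smul_def, SpecialLinearGroup.transvection_coe, smul_eq_mulVec,
    add_mulVec, one_mulVec, single_mulVec_eq, ← Pi.single_smul', smul_eq_mul, mul_one]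

lemma single_mem_orbit_single {i j : ι} (hij : i ≠ j) (a : R) :
    (Pi.single i a : ι → R) ∈ orbit (SpecialLinearGroup ι R) (Pi.single j a : ι → R) := by
  refine ⟨SpecialLinearGroup.transvection hij.symm (-1) *
    SpecialLinearGroup.transvection hij 1, ?_⟩
  simp [mul_smul, SpecialLinearGroup.transvection_smul, hij, Pi.single_neg]

lemma neg_single_mem_orbit_single {i j : ι} (hij : i ≠ j) (a : R) :
    (Pi.single i (-a) : ι → R) ∈ orbit (SpecialLinearGroup ι R) (Pi.single j a : ι → R) := by
  refine ⟨SpecialLinearGroup.transvection hij.symm 1 *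
    SpecialLinearGroup.transvection hij (-1), ?_⟩
  simp [mul_smul, SpecialLinearGroup.transvection_smul, hij, Pi.single_neg]

lemma orbit_single_eq_orbit_single (i j : ι) (a : R) :
    orbit (SpecialLinearGroup ι R) (Pi.single i a : ι → R) =
      orbit (SpecialLinearGroup ι R) (Pi.single j a : ι → R) := by
  obtain rfl | hij := eq_or_ne i j
  · rfl
  · exact orbit_eq_iff.mpr (single_mem_orbit_single hij a)

lemma orbit_single_neg [Nontrivial ι] (i : ι) (a : R) :
    orbit (SpecialLinearGroup ι R) (Pi.single i (-a) : ι → R) =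
      orbit (SpecialLinearGroup ι R) (Pi.single i a : ι → R) := by
  obtain ⟨j, hji⟩ := exists_ne i
  rw [orbit_eq_iff.mpr (neg_single_mem_orbit_single hji.symm a), orbit_single_eq_orbit_single]

lemma orbit_single_eq_orbit_single_natAbs [Nontrivial ι] (i i₀ : ι) (a : ℤ) :
    orbit (SpecialLinearGroup ι ℤ) (Pi.single i a : ι → ℤ) =
      orbit (SpecialLinearGroup ι ℤ) (Pi.single i₀ (a.natAbs : ℤ) : ι → ℤ) := by
  rw [orbit_single_eq_orbit_single i i₀]
  obtain h | h := Int.natAbs_eq a <;> nth_rw 1 [h]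
  exact orbit_single_neg i₀ _

end Transvection

def coordGcd {ι : Type*} [Fintype ι] (z : ι → ℤ) : ℕ :=
  Finset.univ.gcd fun i => (z i).natAbs

section CoordGcd

variable {ι : Type*} [Fintype ι]

lemma coordGcd_dvd (z : ι → ℤ) (i : ι) : (coordGcd z : ℤ) ∣ z i :=
  Int.natCast_dvd.mpr (Finset.gcd_dvd (Finset.mem_univ i))

lemma coordGcd_eq_zero_iff {z : ι → ℤ} : coordGcd z = 0 ↔ z = 0 := by
  simp [coordGcd, Finset.gcd_eq_zero_iff, funext_iff]

lemma coordGcd_dvd_coordGcd_mulVec (M : Matrix ι ι ℤ) (z : ι → ℤ) :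
    coordGcd z ∣ coordGcd (M *ᵥ z) :=
  Finset.dvd_gcd fun _ _ =>
    Int.natCast_dvd.mp (Finset.dvd_sum fun j _ => (coordGcd_dvd z j).mul_left _)

variable [DecidableEq ι]

lemma coordGcd_single (i : ι) (a : ℤ) : coordGcd (Pi.single i a) = a.natAbs := by
  refine Nat.dvd_antisymm ?_ (Finset.dvd_gcd fun l _ => ?_)
  · exact Int.natCast_dvd.mp (by simpa using coordGcd_dvd (Pi.single i a) i)
  · obtain rfl | hli := eq_or_ne l i <;> simp [*]

lemma coordGcd_smul (M : SpecialLinearGroup ι ℤ) (z : ι → ℤ) :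
    coordGcd (M • z) = coordGcd z := by
  refine Nat.dvd_antisymm ?_ (coordGcd_dvd_coordGcd_mulVec M.1 z)
  have h : coordGcd (M • z) ∣ coordGcd (M⁻¹ • M • z) :=
    coordGcd_dvd_coordGcd_mulVec (M⁻¹).1 (M • z)
  rwa [inv_smul_smul] at h

end CoordGcd

lemma Int.natAbs_emod_lt (a : ℤ) {b : ℤ} (hb : b ≠ 0) : (a % b).natAbs < b.natAbs := by
  have := Int.emod_lt a hb
  have := Int.emod_nonneg a hb
  omega

section Classification

variable {ι : Type*} [Fintype ι] [DecidableEq ι]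

lemma exists_mem_orbit_sum_natAbs_lt {z : ι → ℤ} {i j : ι} (hij : i ≠ j) (hi : z i ≠ 0)
    (hj : z j ≠ 0) :
    ∃ w ∈ orbit (SpecialLinearGroup ι ℤ) z, ∑ l, (w l).natAbs < ∑ l, (z l).natAbs := by
  wlog hle : (z i).natAbs ≤ (z j).natAbs generalizing i j
  · exact this hij.symm hj hi (le_of_not_ge hle)
  -- one step of Euclid's algorithm: replace `z j` by `z j % z i`
  set w := z + Pi.single j (-(z j / z i) * z i)
  have hwj : w j = z j % z i := by
    simp only [w, Pi.add_apply, Pi.single_eq_same, Int.emod_def]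
    ring
  have hlt : (w j).natAbs < (z j).natAbs := hwj ▸ (Int.natAbs_emod_lt (z j) hi).trans_le hle
  have hw : w ∈ orbit (SpecialLinearGroup ι ℤ) z :=
    ⟨SpecialLinearGroup.transvection hij.symm (-(z j / z i)),
      SpecialLinearGroup.transvection_smul _ _ _⟩
  refine ⟨w, hw, Finset.sum_lt_sum (fun l _ => ?_) ⟨j, Finset.mem_univ j, hlt⟩⟩
  obtain rfl | hlj := eq_or_ne l j
  · exact hlt.le
  · simp [w, hlj]

lemma orbit_eq_orbit_single_coordGcd [Nontrivial ι] (i₀ : ι) {z : ι → ℤ} (hz : z ≠ 0) :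
    orbit (SpecialLinearGroup ι ℤ) z =
      orbit (SpecialLinearGroup ι ℤ) (Pi.single i₀ (coordGcd z : ℤ) : ι → ℤ) := by
  induction hn : ∑ l, (z l).natAbs using Nat.strong_induction_on generalizing z with
  | _ n ih =>
  by_cases htwo : ∃ i j, i ≠ j ∧ z i ≠ 0 ∧ z j ≠ 0
  · obtain ⟨i, j, hij, hi, hj⟩ := htwo
    obtain ⟨_, ⟨M, rfl⟩, hlt⟩ := exists_mem_orbit_sum_natAbs_lt hij hi hj
    rw [← orbit_smul M z, ih _ (hn ▸ hlt) ((smul_ne_zero_iff_ne M).mpr hz) rfl, coordGcd_smul]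
  · push Not at htwo
    obtain ⟨i, hi⟩ := Function.ne_iff.mp hz
    have hzi : z = Pi.single i (z i) := by
      ext l
      obtain rfl | hli := eq_or_ne l i
      · simp
      · simp [hli, htwo i l (Ne.symm hli) hi]
    rw [hzi, coordGcd_single, orbit_single_eq_orbit_single_natAbs i i₀]

theorem mem_orbit_iff_coordGcd_eq [Nontrivial ι] {z w : ι → ℤ} (hz : z ≠ 0) :
    w ∈ orbit (SpecialLinearGroup ι ℤ) z ↔ w ≠ 0 ∧ coordGcd w = coordGcd z := by
  refine ⟨?_, fun ⟨hw, h⟩ => ?_⟩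
  · rintro ⟨M, rfl⟩
    exact ⟨(smul_ne_zero_iff_ne M).mpr hz, coordGcd_smul M z⟩
  · obtain ⟨i₀, -⟩ := exists_pair_ne ι
    rw [← orbit_eq_iff, orbit_eq_orbit_single_coordGcd i₀ hz,
      orbit_eq_orbit_single_coordGcd i₀ hw, h]

end Classification

theorem SL_invariant_eq_union_visible_general (k : ℕ) (hk : 2 ≤ k) (Y : Set (Fin k → ℤ))
    (h0 : (0 : Fin k → ℤ) ∉ Y)
    (hinv : ∀ M : Matrix.SpecialLinearGroup (Fin k) ℤ,
      (fun z => (M : Matrix (Fin k) (Fin k) ℤ).mulVec z) '' Y = Y) :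
    Y = ⋃ t ∈ {t : ℕ | 1 ≤ t ∧ ∃ z ∈ Y, Finset.univ.gcd (fun i => (z i).natAbs) = t},
          {z : Fin k → ℤ | z ≠ 0 ∧ Finset.univ.gcd (fun i => (z i).natAbs) = t} := by
  have : Nontrivial (Fin k) := Fin.nontrivial_iff_two_le.mpr hk
  ext z
  simp only [Set.mem_iUnion, exists_prop]
  constructor
  · intro hz
    have hz0 : z ≠ 0 := ne_of_mem_of_not_mem hz h0
    have hgcd : 1 ≤ coordGcd z := Nat.one_le_iff_ne_zero.mpr (coordGcd_eq_zero_iff.not.mpr hz0)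
    exact ⟨coordGcd z, ⟨hgcd, z, hz, rfl⟩, hz0, rfl⟩
  · rintro ⟨t, ⟨-, w, hw, rfl⟩, hz0, hzw⟩
    obtain ⟨M, rfl⟩ := (mem_orbit_iff_coordGcd_eq (ne_of_mem_of_not_mem hw h0)).mpr ⟨hz0, hzw⟩
    rw [← hinv M]
    exact ⟨w, hw, rfl⟩

theorem SL_invariant_eq_union_visible (k : ℕ) (hk : 2 ≤ k) (Y : Set (Fin k → ℤ))
    (hne : Y.Nonempty) (h0 : (0 : Fin k → ℤ) ∉ Y)
    (hinv : ∀ M : Matrix.SpecialLinearGroup (Fin k) ℤ,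
      (fun z => (M : Matrix (Fin k) (Fin k) ℤ).mulVec z) '' Y = Y) :
    Y = ⋃ t ∈ {t : ℕ | 1 ≤ t ∧ ∃ z ∈ Y, Finset.univ.gcd (fun i => (z i).natAbs) = t},
          {z : Fin k → ℤ | z ≠ 0 ∧ Finset.univ.gcd (fun i => (z i).natAbs) = t} :=
  SL_invariant_eq_union_visible_general k hk Y h0 hinv
end

section
/- For a free group F of rank k ≥ 2 with the word-length function, if a subset S ⊆ F has strict asymptotic density ρ (i.e., the limit of ball proportions #{w ∈ S : |w| ≤ n}/#{w ∈ F : |w| ≤ n} exists and equals ρ), then the strict annular density of S also exists and equals ρ, i.e. lim_{n→∞} (1/2)(γ(n−1,S)/γ(n−1,F) + γ(n,S)/γ(n,F)) = ρ, where γ(n,X) = #{w ∈ X : |w| = n}. -/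
/-!
Every reduced word extends by a letter in at least two ways, so spheres at least double in size
and each sphere is at least as large as the ball inside it: the ball counts `B n` of `F` at least
double at each step. For a denominator growing geometrically, convergence of `b n / B n` forces
the quotients of increments `(b (n + 1) - b n) / (B (n + 1) - B n)` to the same limit. Applied to
the ball counts of `S` and of `F`, the sphere densities of `S` converge to `ρ`, hence so does the
average of two consecutive ones.
-/

open Filter Topology

theorem tendsto_sub_div_sub_of_tendsto_div {b B : ℕ → ℝ} {q ρ : ℝ} (hq : 1 < q)
    (hB : ∀ n, 0 < B n) (hgrow : ∀ n, q * B n ≤ B (n + 1))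
    (h : Tendsto (fun n => b n / B n) atTop (𝓝 ρ)) :
    Tendsto (fun n => (b (n + 1) - b n) / (B (n + 1) - B n)) atTop (𝓝 ρ) := by
  set r := fun n => b n / B n
  set c := fun n => B n / (B (n + 1) - B n)
  have hΔ : ∀ n, (q - 1) * B n ≤ B (n + 1) - B n := fun n => by linarith [hgrow n]
  have hΔpos : ∀ n, 0 < B (n + 1) - B n := fun n =>
    (mul_pos (sub_pos.2 hq) (hB n)).trans_le (hΔ n)
  have hc : ∀ n, ‖c n‖ ≤ (q - 1)⁻¹ := fun n => by
    rw [Real.norm_of_nonneg (div_nonneg (hB n).le (hΔpos n).le), div_le_iff₀ (hΔpos n),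
      le_inv_mul_iff₀ (sub_pos.2 hq)]
    exact hΔ n
  have hsplit : ∀ n,
      (b (n + 1) - b n) / (B (n + 1) - B n) = r (n + 1) + (r (n + 1) - r n) * c n := fun n => by
    have := (hB n).ne'; have := (hB (n + 1)).ne'; have := (hΔpos n).ne'
    simp only [r, c]; field_simp; ring
  have hr : Tendsto (fun n => r (n + 1)) atTop (𝓝 ρ) := h.comp (tendsto_add_atTop_nat 1)
  have hdiff : Tendsto (fun n => r (n + 1) - r n) atTop (𝓝 0) := by
    simpa using hr.sub h
  simp_rw [hsplit]
  have hbounded : IsBoundedUnder (· ≤ ·) atTop (‖c ·‖) :=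
    ⟨(q - 1)⁻¹, eventually_map.2 (.of_forall hc)⟩
  simpa using hr.add (hdiff.zero_mul_isBoundedUnder_le hbounded)

namespace FreeGroup

variable {α : Type*}

theorem isReduced_append_singleton {L : List (α × Bool)} {x : α × Bool} (hL : IsReduced L)
    (hx : ∀ y ∈ L.getLast?, y.1 ≠ x.1) : IsReduced (L ++ [x]) :=
  List.isChain_append.2 ⟨hL, .singleton x, fun y hy z hz => by
    simp only [List.head?_cons, Option.mem_def, Option.some.injEq] at hz
    subst hz; exact fun h => absurd h (hx y hy)⟩

variable [DecidableEq α]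

theorem finite_setOf_norm_le [Finite α] (n : ℕ) : {w : FreeGroup α | w.norm ≤ n}.Finite :=
  (List.finite_length_le _ n).preimage toWord_injective.injOn

theorem card_sphere_zero : Nat.card {w : FreeGroup α // w.norm = 0} = 1 := by
  simp [norm_eq_zero]

-- A reduced word extends to two reduced words of length `n + 1`, ending in either letter of a
-- generator different from its last one.
theorem two_mul_card_sphere_le [Finite α] [Nontrivial α] (n : ℕ) :
    2 * Nat.card {w : FreeGroup α // w.norm = n} ≤
      Nat.card {w : FreeGroup α // w.norm = n + 1} := by
  choose a ha using fun L : List (α × Bool) =>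
    exists_ne (L.getLast?.elim (Classical.arbitrary α) Prod.fst)
  have hred : ∀ (w : FreeGroup α) (s : Bool), IsReduced (w.toWord ++ [(a w.toWord, s)]) := by
    intro w s
    refine isReduced_append_singleton isReduced_toWord fun y hy => ?_
    have := ha w.toWord
    rw [hy] at this
    exact (this ·.symm)
  let ext : {w : FreeGroup α // w.norm = n} × Bool → {w : FreeGroup α // w.norm = n + 1} :=
    fun ⟨w, s⟩ => ⟨mk (w.1.toWord ++ [(a w.1.toWord, s)]), by
      simp [norm, toWord_mk, (hred w.1 s).reduce_eq, show w.1.toWord.length = n from w.2]⟩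
  have hext : Function.Injective ext := by
    rintro ⟨⟨w, hw⟩, s⟩ ⟨⟨w', hw'⟩, s'⟩ h
    have h' := congrArg (fun v => v.1.toWord) h
    simp only [ext, toWord_mk, (hred _ _).reduce_eq] at h'
    obtain ⟨hww', hss'⟩ := List.append_inj h' (hw.trans hw'.symm)
    obtain rfl := toWord_injective hww'
    simp_all
  have : Finite {w : FreeGroup α // w.norm = n + 1} :=
    ((finite_setOf_norm_le (n + 1)).subset fun w (hw : w.norm = n + 1) => hw.le).to_subtype
  simpa [Nat.card_prod, mul_comm] using Nat.card_le_card_of_injective ext hext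

theorem card_ball_inter_succ [Finite α] (X : Set (FreeGroup α)) (n : ℕ) :
    Nat.card {w // w ∈ X ∧ w.norm ≤ n + 1} =
      Nat.card {w // w ∈ X ∧ w.norm ≤ n} + Nat.card {w // w ∈ X ∧ w.norm = n + 1} := by
  have hunion : {w | w ∈ X ∧ w.norm ≤ n + 1} =
      {w | w ∈ X ∧ w.norm ≤ n} ∪ {w | w ∈ X ∧ w.norm = n + 1} := by
    ext w; simp [Nat.le_succ_iff, and_or_left]
  have hdisj : Disjoint {w | w ∈ X ∧ w.norm ≤ n} {w | w ∈ X ∧ w.norm = n + 1} :=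
    Set.disjoint_left.2 fun w h h' => by simp at h h'; omega
  have hfin : ∀ m, {w | w ∈ X ∧ w.norm ≤ m}.Finite := fun m =>
    (finite_setOf_norm_le m).subset fun w hw => hw.2
  have h := Set.ncard_union_eq hdisj (hfin n)
    ((hfin (n + 1)).subset fun w hw => ⟨hw.1, hw.2.le⟩)
  rw [← hunion] at h
  simp only [← Nat.card_coe_set_eq] at h
  exact h

theorem card_ball_succ [Finite α] (n : ℕ) :
    Nat.card {w : FreeGroup α // w.norm ≤ n + 1} =
      Nat.card {w : FreeGroup α // w.norm ≤ n} +
        Nat.card {w : FreeGroup α // w.norm = n + 1} := by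
  simpa using card_ball_inter_succ Set.univ n

theorem card_ball_le_card_sphere_succ [Finite α] [Nontrivial α] (n : ℕ) :
    Nat.card {w : FreeGroup α // w.norm ≤ n} ≤
      Nat.card {w : FreeGroup α // w.norm = n + 1} := by
  induction n with
  | zero =>
    have := two_mul_card_sphere_le (α := α) 0
    simp only [Nat.le_zero, card_sphere_zero] at this ⊢
    omega
  | succ m ih =>
    have := two_mul_card_sphere_le (α := α) (m + 1)
    have := card_ball_succ (α := α) m
    omega

theorem two_mul_card_ball_le [Finite α] [Nontrivial α] (n : ℕ) :
    2 * Nat.card {w : FreeGroup α // w.norm ≤ n} ≤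
      Nat.card {w : FreeGroup α // w.norm ≤ n + 1} := by
  have := card_ball_succ (α := α) n
  have := card_ball_le_card_sphere_succ (α := α) n
  omega

theorem card_ball_pos [Finite α] (n : ℕ) : 0 < Nat.card {w : FreeGroup α // w.norm ≤ n} :=
  Nat.card_pos_iff.2 ⟨⟨1, by simp⟩, (finite_setOf_norm_le n).to_subtype⟩

theorem tendsto_sphere_density_of_tendsto_ball_density [Finite α] [Nontrivial α]
    {S : Set (FreeGroup α)} {ρ : ℝ}
    (h : Tendsto (fun n => (Nat.card {w // w ∈ S ∧ w.norm ≤ n} : ℝ) /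
      Nat.card {w : FreeGroup α // w.norm ≤ n}) atTop (𝓝 ρ)) :
    Tendsto (fun n => (Nat.card {w // w ∈ S ∧ w.norm = n} : ℝ) /
      Nat.card {w : FreeGroup α // w.norm = n}) atTop (𝓝 ρ) := by
  rw [← tendsto_add_atTop_iff_nat 1]
  have hpos n : (0 : ℝ) < Nat.card {w : FreeGroup α // w.norm ≤ n} := mod_cast card_ball_pos n
  have hgrow n : (2 : ℝ) * Nat.card {w : FreeGroup α // w.norm ≤ n} ≤
      Nat.card {w : FreeGroup α // w.norm ≤ n + 1} := mod_cast two_mul_card_ball_le n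
  convert tendsto_sub_div_sub_of_tendsto_div one_lt_two hpos hgrow h using 2 with n
  rw [card_ball_inter_succ, card_ball_succ]
  push_cast
  ring

end FreeGroup

theorem annular_of_asymptotic (k : ℕ) (hk : 2 ≤ k) (S : Set (FreeGroup (Fin k))) (ρ : ℝ)
    (γ : Set (FreeGroup (Fin k)) → ℕ → ℝ)
    (hγ : ∀ X n, γ X n = (Nat.card {w : FreeGroup (Fin k) // w ∈ X ∧
        (FreeGroup.toWord w).length = n} : ℝ))
    (hball : Tendsto (fun n : ℕ =>
        (Nat.card {w : FreeGroup (Fin k) // w ∈ S ∧ (FreeGroup.toWord w).length ≤ n} : ℝ) /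
        (Nat.card {w : FreeGroup (Fin k) // (FreeGroup.toWord w).length ≤ n} : ℝ))
      atTop (nhds ρ)) :
    Tendsto (fun n : ℕ =>
        (1 / 2) * (γ S (n - 1) / γ Set.univ (n - 1) + γ S n / γ Set.univ n))
      atTop (nhds ρ) := by
  have : Nontrivial (Fin k) := Fin.nontrivial_iff_two_le.2 hk
  have hsphere : Tendsto (fun n => γ S n / γ Set.univ n) atTop (𝓝 ρ) := by
    simp only [hγ, Set.mem_univ, true_and]
    exact FreeGroup.tendsto_sphere_density_of_tendsto_ball_density hball
  have := ((hsphere.comp (tendsto_sub_atTop_nat 1)).add hsphere).const_mul (1 / 2 : ℝ)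
  rwa [show (1 / 2 : ℝ) * (ρ + ρ) = ρ by ring] at this
end

section
/- Let F be a free group of rank k ≥ 2 and let Y ⊆ F be a subset whose strict annular density δ exists. Then liminf_{n→∞} ρ(n,Y)/ρ(n,F) ≥ (4k−4)/(2k−1)² · δ and limsup_{n→∞} ρ(n,Y)/ρ(n,F) ≤ 1 − (4k−4)/(2k−1)² · (1−δ), where ρ(n,X) = #{w ∈ X : |w| ≤ n}. -/
/-!
In the free group of rank `k`, the ball `B n` is dominated by its outer sphere,
`(2k - 2) |B n| ≤ (2k - 1) |S n|`, and `|S n| = (2k - 1) |S (n - 1)|`. Hence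
`c_k |B n| / 2 ≤ |S (n - 1)| ≤ |S n|` with `c_k = (4k - 4) / (2k - 1)²`.
As `Y ∩ B n` contains the disjoint union of `Y ∩ S (n - 1)` and `Y ∩ S n`, the ball density of
`Y` at radius `n` is at least `c_k` times the average of its densities on these two spheres, which
gives the lower bound in the limit. The upper bound is the lower bound for the complement of `Y`,
whose strict annular density is `1 - δ`.
-/

open Filter Topology

theorem ncard_compl_inter_div_eq_one_sub {β : Type*} {s : Set β} (hs : s.Finite)
    (hne : s.Nonempty) (X : Set β) :
    ((Xᶜ ∩ s).ncard / s.ncard : ℝ) = 1 - (X ∩ s).ncard / s.ncard := by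
  have hpos : (0 : ℝ) < s.ncard := Nat.cast_pos.2 ((Set.ncard_pos hs).2 hne)
  rw [eq_sub_iff_add_eq, ← add_div, div_eq_one_iff_eq hpos.ne', ← Nat.cast_add, Nat.cast_inj,
    Set.inter_comm, Set.inter_comm X, ← Set.sdiff_eq, add_comm,
    Set.ncard_inter_add_ncard_sdiff_eq_ncard _ _ hs]

namespace FreeGroup

variable {α : Type*}

theorem isReduced_cons {a : α × Bool} {L : List (α × Bool)} :
    IsReduced (a :: L) ↔ (∀ b ∈ L.head?, a.1 = b.1 → a.2 = b.2) ∧ IsReduced L :=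
  List.isChain_cons

def reducedWords (α : Type*) (n : ℕ) : Set (List (α × Bool)) :=
  {L | IsReduced L ∧ L.length = n}

theorem reducedWords_zero : reducedWords α 0 = {[]} := by
  ext L
  simp only [reducedWords, Set.mem_ofPred_eq, Set.mem_singleton_iff, List.length_eq_zero_iff]
  exact ⟨And.right, fun h => ⟨h ▸ .nil, h⟩⟩

theorem reducedWords_one : reducedWords α 1 = Set.range fun a => [a] := by
  ext L
  simp only [reducedWords, Set.mem_ofPred_eq, Set.mem_range, List.length_eq_one_iff]
  constructor
  · rintro ⟨-, a, rfl⟩; exact ⟨a, rfl⟩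
  · rintro ⟨a, rfl⟩; exact ⟨.singleton, a, rfl⟩

theorem ncard_reducedWords_one : (reducedWords α 1).ncard = 2 * Nat.card α := by
  rw [reducedWords_one, ← Set.image_univ, Set.ncard_image_of_injective _ List.singleton_injective,
    Set.ncard_univ, Nat.card_prod, Nat.card_eq_fintype_card (α := Bool), Fintype.card_bool,
    mul_comm]

theorem card_letters_not_cancelling [Finite α] (b : α × Bool) :
    Nat.card {a : α × Bool // a.1 = b.1 → a.2 = b.2} = 2 * Nat.card α - 1 := by
  have : {a : α × Bool | a.1 = b.1 → a.2 = b.2} = {(b.1, !b.2)}ᶜ := by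
    ext ⟨x, s⟩
    obtain ⟨y, t⟩ := b
    cases s <;> cases t <;> simp [imp_iff_not_or, or_comm]
  rw [← Set.coe_ofPred, Nat.card_coe_set_eq, this, Set.ncard_compl, Set.ncard_singleton,
    Nat.card_prod, Nat.card_eq_fintype_card (α := Bool), Fintype.card_bool, mul_comm]

noncomputable def reducedWordsConsEquiv (n : ℕ) :
    (Σ L : reducedWords α (n + 1),
        {a : α × Bool // ∀ b ∈ L.1.head?, a.1 = b.1 → a.2 = b.2}) ≃
      reducedWords α (n + 2) :=
  Equiv.ofBijective
    (fun p => ⟨p.2.1 :: p.1.1, isReduced_cons.2 ⟨p.2.2, p.1.2.1⟩, by simp [p.1.2.2]⟩) <| by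
    constructor
    · rintro ⟨⟨L, hL⟩, a, ha⟩ ⟨⟨L', hL'⟩, a', ha'⟩ h
      obtain ⟨rfl, rfl⟩ := List.cons.inj (congrArg Subtype.val h)
      rfl
    · rintro ⟨_ | ⟨a, L⟩, hL, hlen⟩
      · simp at hlen
      · obtain ⟨ha, hL⟩ := isReduced_cons.1 hL
        exact ⟨⟨⟨L, hL, by simpa using hlen⟩, a, ha⟩, rfl⟩

theorem ncard_reducedWords_succ_succ [Finite α] (n : ℕ) :
    (reducedWords α (n + 2)).ncard = (2 * Nat.card α - 1) * (reducedWords α (n + 1)).ncard := by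
  have : Finite (reducedWords α (n + 1)) :=
    ((List.finite_length_eq _ (n + 1)).subset fun _ hL => hL.2).to_subtype
  have := Fintype.ofFinite (reducedWords α (n + 1))
  rw [← Nat.card_coe_set_eq, ← Nat.card_congr (reducedWordsConsEquiv n), Nat.card_sigma,
    Finset.sum_const_nat (m := 2 * Nat.card α - 1), Finset.card_univ, ← Nat.card_eq_fintype_card,
    Nat.card_coe_set_eq, mul_comm]
  rintro ⟨L, hL, hlen⟩ -
  obtain ⟨b, L, rfl⟩ := List.exists_cons_of_length_eq_add_one hlen
  simpa using card_letters_not_cancelling b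

variable [DecidableEq α]

def wordSphere (n : ℕ) : Set (FreeGroup α) := {w | w.toWord.length = n}

def wordBall (n : ℕ) : Set (FreeGroup α) := {w | w.toWord.length ≤ n}

theorem toWord_image_wordSphere (n : ℕ) : toWord '' wordSphere n = reducedWords α n := by
  ext L
  constructor
  · rintro ⟨w, hw, rfl⟩
    exact ⟨isReduced_toWord, hw⟩
  · rintro ⟨hL, hlen⟩
    exact ⟨mk L, by simpa [wordSphere, toWord_mk, hL.reduce_eq] using hlen,
      by rw [toWord_mk, hL.reduce_eq]⟩

theorem ncard_wordSphere (n : ℕ) :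
    (wordSphere n : Set (FreeGroup α)).ncard = (reducedWords α n).ncard := by
  rw [← toWord_image_wordSphere, Set.ncard_image_of_injective _ toWord_injective]

theorem ncard_wordSphere_zero : (wordSphere 0 : Set (FreeGroup α)).ncard = 1 := by
  rw [ncard_wordSphere, reducedWords_zero, Set.ncard_singleton]

theorem ncard_wordSphere_succ [Finite α] (n : ℕ) :
    (wordSphere (n + 1) : Set (FreeGroup α)).ncard =
      2 * Nat.card α * (2 * Nat.card α - 1) ^ n := by
  induction n with
  | zero => rw [ncard_wordSphere, ncard_reducedWords_one, pow_zero, mul_one]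
  | succ n ih =>
    rw [ncard_wordSphere, ncard_reducedWords_succ_succ, ← ncard_wordSphere, ih, pow_succ]
    ring

theorem wordSphere_subset_wordBall (n : ℕ) : (wordSphere n : Set (FreeGroup α)) ⊆ wordBall n :=
  fun _ hw => le_of_eq hw

theorem wordBall_finite [Finite α] (n : ℕ) : (wordBall n : Set (FreeGroup α)).Finite :=
  (List.finite_length_le _ n).preimage toWord_injective.injOn

theorem wordSphere_finite [Finite α] (n : ℕ) : (wordSphere n : Set (FreeGroup α)).Finite :=
  (wordBall_finite n).subset (wordSphere_subset_wordBall n)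

theorem wordBall_zero : (wordBall 0 : Set (FreeGroup α)) = wordSphere 0 := by
  ext w; exact Nat.le_zero

theorem wordBall_succ (n : ℕ) :
    (wordBall (n + 1) : Set (FreeGroup α)) = wordBall n ∪ wordSphere (n + 1) := by
  ext w; exact Nat.le_succ_iff

theorem disjoint_wordBall_wordSphere (n : ℕ) :
    Disjoint (wordBall n : Set (FreeGroup α)) (wordSphere (n + 1)) :=
  Set.disjoint_left.2 fun w (hw : _ ≤ n) (hw' : _ = n + 1) => by omega

theorem ncard_wordSphere_pos [Finite α] [Nonempty α] (n : ℕ) :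
    0 < (wordSphere n : Set (FreeGroup α)).ncard := by
  have : 0 < Nat.card α := Nat.card_pos
  cases n with
  | zero => rw [ncard_wordSphere_zero]; exact one_pos
  | succ n => rw [ncard_wordSphere_succ]; exact Nat.mul_pos (by omega) (pow_pos (by omega) _)

theorem ncard_wordSphere_succ_succ [Finite α] [Nonempty α] (n : ℕ) :
    ((wordSphere (n + 2) : Set (FreeGroup α)).ncard : ℝ) =
      (2 * Nat.card α - 1) * (wordSphere (n + 1) : Set (FreeGroup α)).ncard := by
  have : 1 ≤ 2 * Nat.card α := by linarith [Nat.card_pos (α := α)]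
  rw [ncard_wordSphere_succ, ncard_wordSphere_succ, pow_succ]
  push_cast [Nat.cast_sub this]
  ring

theorem ncard_wordBall_succ_le [Finite α] [Nonempty α] (n : ℕ) :
    (2 * Nat.card α - 2 : ℝ) * (wordBall (n + 1) : Set (FreeGroup α)).ncard ≤
      (2 * Nat.card α - 1) * (wordSphere (n + 1) : Set (FreeGroup α)).ncard := by
  have hk : (1 : ℝ) ≤ Nat.card α := Nat.one_le_cast.2 Nat.card_pos
  have hsplit (m : ℕ) : ((wordBall (m + 1) : Set (FreeGroup α)).ncard : ℝ) =
      (wordBall m : Set (FreeGroup α)).ncard +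
        (wordSphere (m + 1) : Set (FreeGroup α)).ncard := by
    rw [wordBall_succ, Set.ncard_union_eq (disjoint_wordBall_wordSphere m) (wordBall_finite m)
      (wordSphere_finite _), Nat.cast_add]
  induction n with
  | zero =>
    rw [hsplit, wordBall_zero, ncard_wordSphere_zero, ncard_wordSphere_succ]
    push_cast
    nlinarith
  | succ n ih =>
    rw [hsplit, ncard_wordSphere_succ_succ]
    nlinarith [ncard_wordSphere_pos (α := α) (n + 1)]

noncomputable def sphereDensity (X : Set (FreeGroup α)) (n : ℕ) : ℝ :=
  (X ∩ wordSphere n).ncard / (wordSphere n : Set (FreeGroup α)).ncard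

noncomputable def ballDensity (X : Set (FreeGroup α)) (n : ℕ) : ℝ :=
  (X ∩ wordBall n).ncard / (wordBall n : Set (FreeGroup α)).ncard

noncomputable def annularDensity (X : Set (FreeGroup α)) (n : ℕ) : ℝ :=
  (1 / 2) * (sphereDensity X (n - 1) + sphereDensity X n)

theorem sphereDensity_compl [Finite α] [Nonempty α] (X : Set (FreeGroup α)) (n : ℕ) :
    sphereDensity Xᶜ n = 1 - sphereDensity X n :=
  ncard_compl_inter_div_eq_one_sub (wordSphere_finite n)
    (Set.nonempty_of_ncard_ne_zero (ncard_wordSphere_pos n).ne') X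

theorem annularDensity_compl [Finite α] [Nonempty α] (X : Set (FreeGroup α)) (n : ℕ) :
    annularDensity Xᶜ n = 1 - annularDensity X n := by
  simp only [annularDensity, sphereDensity_compl]
  ring

theorem ballDensity_compl [Finite α] (X : Set (FreeGroup α)) (n : ℕ) :
    ballDensity Xᶜ n = 1 - ballDensity X n :=
  ncard_compl_inter_div_eq_one_sub (wordBall_finite n) ⟨1, Nat.zero_le _⟩ X

theorem ballDensity_nonneg (X : Set (FreeGroup α)) (n : ℕ) : 0 ≤ ballDensity X n := by
  unfold ballDensity; positivity

theorem ballDensity_le_one [Finite α] (X : Set (FreeGroup α)) (n : ℕ) : ballDensity X n ≤ 1 :=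
  div_le_one_of_le₀
    (Nat.cast_le.2 (Set.ncard_le_ncard Set.inter_subset_right (wordBall_finite n)))
    (Nat.cast_nonneg _)

theorem ncard_inter_wordSphere_add_le [Finite α] (X : Set (FreeGroup α)) (n : ℕ) :
    (X ∩ wordSphere (n + 1)).ncard + (X ∩ wordSphere (n + 2)).ncard ≤
      (X ∩ wordBall (n + 2)).ncard := by
  have hdisj : Disjoint (X ∩ wordSphere (n + 1)) (X ∩ wordSphere (n + 2)) :=
    (disjoint_wordBall_wordSphere (n + 1)).mono
      (Set.inter_subset_right.trans (wordSphere_subset_wordBall _)) Set.inter_subset_right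
  rw [← Set.ncard_union_eq hdisj ((wordSphere_finite _).inter_of_right X)
    ((wordSphere_finite _).inter_of_right X), ← Set.inter_union_distrib_left]
  refine Set.ncard_le_ncard (Set.inter_subset_inter_right X ?_)
    ((wordBall_finite _).inter_of_right X)
  rw [wordBall_succ]
  exact Set.union_subset_union_left _ (wordSphere_subset_wordBall _)

theorem mul_annularDensity_le_ballDensity [Finite α] [Nonempty α] (X : Set (FreeGroup α))
    (n : ℕ) :
    (4 * Nat.card α - 4 : ℝ) / (2 * Nat.card α - 1) ^ 2 * annularDensity X (n + 2) ≤
      ballDensity X (n + 2) := by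
  have hk : (1 : ℝ) ≤ Nat.card α := Nat.one_le_cast.2 Nat.card_pos
  set S₁ : ℝ := ((wordSphere (n + 1) : Set (FreeGroup α)).ncard : ℝ)
  set S₂ : ℝ := ((wordSphere (n + 2) : Set (FreeGroup α)).ncard : ℝ)
  set B : ℝ := ((wordBall (n + 2) : Set (FreeGroup α)).ncard : ℝ)
  have hS₁ : 0 < S₁ := Nat.cast_pos.2 (ncard_wordSphere_pos _)
  have hS₂ : 0 < S₂ := Nat.cast_pos.2 (ncard_wordSphere_pos _)
  have hS₂eq : S₂ = (2 * Nat.card α - 1) * S₁ := ncard_wordSphere_succ_succ n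
  have hB : 0 < B := Nat.cast_pos.2 ((Set.ncard_pos (wordBall_finite _)).2 ⟨1, Nat.zero_le _⟩)
  set c := (4 * Nat.card α - 4 : ℝ) / (2 * Nat.card α - 1) ^ 2 * B / 2
  have hc₁ : c ≤ S₁ := by
    have h : (2 * Nat.card α - 2 : ℝ) * B ≤ (2 * Nat.card α - 1) * S₂ :=
      ncard_wordBall_succ_le (n + 1)
    rw [hS₂eq] at h
    rw [div_le_iff₀ two_pos, div_mul_eq_mul_div, div_le_iff₀ (by nlinarith)]
    nlinarith
  have hc₂ : c ≤ S₂ := hc₁.trans (by rw [hS₂eq]; nlinarith)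
  have hratio {s S : ℝ} (hs : 0 ≤ s) (hS : 0 < S) (hcS : c ≤ S) : s / S * c ≤ s :=
    (mul_le_mul_of_nonneg_left hcS (div_nonneg hs hS.le)).trans_eq (div_mul_cancel₀ s hS.ne')
  rw [ballDensity, le_div_iff₀ hB]
  calc _ = sphereDensity X (n + 1) * c + sphereDensity X (n + 2) * c := by
        rw [show annularDensity X (n + 2) =
          (1 / 2) * (sphereDensity X (n + 1) + sphereDensity X (n + 2)) from rfl]
        ring
    _ ≤ (X ∩ wordSphere (n + 1)).ncard + (X ∩ wordSphere (n + 2)).ncard :=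
        add_le_add (hratio (Nat.cast_nonneg _) hS₁ hc₁) (hratio (Nat.cast_nonneg _) hS₂ hc₂)
    _ ≤ _ := by exact_mod_cast ncard_inter_wordSphere_add_le X n

theorem le_liminf_ballDensity [Finite α] [Nonempty α] {X : Set (FreeGroup α)} {δ : ℝ}
    (h : Tendsto (annularDensity X) atTop (𝓝 δ)) :
    (4 * Nat.card α - 4 : ℝ) / (2 * Nat.card α - 1) ^ 2 * δ ≤
      liminf (ballDensity X) atTop := by
  have hlim := h.const_mul ((4 * Nat.card α - 4 : ℝ) / (2 * Nat.card α - 1) ^ 2)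
  rw [← hlim.liminf_eq]
  refine liminf_le_liminf ?_ hlim.isBoundedUnder_ge
    (isCoboundedUnder_ge_of_le atTop (ballDensity_le_one X))
  filter_upwards [eventually_ge_atTop 2] with n hn
  obtain ⟨m, rfl⟩ := Nat.exists_eq_add_of_le' hn
  exact mul_annularDensity_le_ballDensity X m

theorem limsup_ballDensity_le [Finite α] [Nonempty α] {X : Set (FreeGroup α)} {δ : ℝ}
    (h : Tendsto (annularDensity X) atTop (𝓝 δ)) :
    limsup (ballDensity X) atTop ≤
      1 - (4 * Nat.card α - 4 : ℝ) / (2 * Nat.card α - 1) ^ 2 * (1 - δ) := by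
  have hcompl : Tendsto (annularDensity Xᶜ) atTop (𝓝 (1 - δ)) := by
    rw [funext (annularDensity_compl X)]
    exact tendsto_const_nhds.sub h
  have hX : ballDensity X = fun n => 1 - ballDensity Xᶜ n := by
    simp only [ballDensity_compl, sub_sub_cancel]
  rw [hX, limsup_const_sub _ _ _ (isCoboundedUnder_ge_of_le atTop (ballDensity_le_one Xᶜ))
    (isBoundedUnder_of ⟨0, ballDensity_nonneg Xᶜ⟩)]
  exact sub_le_sub_left (le_liminf_ballDensity hcompl) 1

end FreeGroup

open FreeGroup

theorem ball_density_bounds_of_annular (k : ℕ) (hk : 2 ≤ k) (Y : Set (FreeGroup (Fin k))) (δ : ℝ)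
    (γ : Set (FreeGroup (Fin k)) → ℕ → ℝ)
    (hγ : ∀ X n, γ X n = (Nat.card {w : FreeGroup (Fin k) // w ∈ X ∧
        (FreeGroup.toWord w).length = n} : ℝ))
    (ρ : Set (FreeGroup (Fin k)) → ℕ → ℝ)
    (hρ : ∀ X n, ρ X n = (Nat.card {w : FreeGroup (Fin k) // w ∈ X ∧
        (FreeGroup.toWord w).length ≤ n} : ℝ))
    (hann : Tendsto (fun n : ℕ =>
        (1 / 2) * (γ Y (n - 1) / γ Set.univ (n - 1) + γ Y n / γ Set.univ n))
      atTop (nhds δ)) :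
    ((4 * k - 4 : ℝ) / (2 * k - 1) ^ 2) * δ ≤
        Filter.liminf (fun n : ℕ => ρ Y n / ρ Set.univ n) atTop ∧
    Filter.limsup (fun n : ℕ => ρ Y n / ρ Set.univ n) atTop ≤
        1 - ((4 * k - 4 : ℝ) / (2 * k - 1) ^ 2) * (1 - δ) := by
  have : Nonempty (Fin k) := ⟨⟨0, by omega⟩⟩
  have hsphere (X : Set (FreeGroup (Fin k))) (n : ℕ) : γ X n = (X ∩ wordSphere n).ncard := by
    rw [hγ, ← Nat.card_coe_set_eq]; rfl
  have hball (X : Set (FreeGroup (Fin k))) (n : ℕ) : ρ X n = (X ∩ wordBall n).ncard := by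
    rw [hρ, ← Nat.card_coe_set_eq]; rfl
  have hann' : Tendsto (annularDensity Y) atTop (𝓝 δ) := hann.congr fun n => by
    simp only [hsphere, Set.univ_inter]; rfl
  have hballDensity : (fun n => ρ Y n / ρ Set.univ n) = ballDensity Y := by
    simp only [hball, Set.univ_inter]; rfl
  rw [hballDensity]
  have hlower := le_liminf_ballDensity hann'
  have hupper := limsup_ballDensity_le hann'
  rw [Nat.card_fin] at hlower hupper
  exact ⟨hlower, hupper⟩
end

section
/- Let a_n ≥ 0 be a sequence with 0 ≤ a_n ≤ 2k(2k−1)^{n−1} (k ≥ 2 an integer) such that lim_{n→∞} (1/2)(a_{n−1}/(2k(2k−1)^{n−2}) + a_n/(2k(2k−1)^{n−1})) = δ. Then liminf_{n→∞} (a_1 + ⋯ + a_n)/((k/(k−1))(2k−1)^n) ≥ (4k−4)/(2k−1)² · δ. -/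
/-!
Multiplying the annular average at radius `n` by `(4k-4)/(2k-1)²` gives exactly
`(a (n-1) + a n / (2k-1)) / ballCard k n`, which is at most the ball density
`(a 1 + ⋯ + a n) / ballCard k n`. The ball density is at most `1` because the spheres of
radius `1, …, n` together are smaller than `ballCard k n`, so the liminf is finite and dominates
the limit `(4k-4)/(2k-1)² · δ`.
-/

open Filter Finset

theorem Filter.Tendsto.le_liminf_of_eventually_le {α β : Type*}
    [ConditionallyCompleteLinearOrder α] [TopologicalSpace α] [OrderTopology α]
    {f : Filter β} [f.NeBot] {u v : β → α} {l : α} (hu : Tendsto u f (nhds l))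
    (hv : IsBoundedUnder (· ≤ ·) f v) (huv : ∀ᶠ n in f, u n ≤ v n) :
    l ≤ liminf v f :=
  hu.liminf_eq ▸ liminf_le_liminf huv hu.isBoundedUnder_ge hv.isCoboundedUnder_ge

noncomputable section

namespace FreeGroupDensity

def sphereCard (k n : ℕ) : ℝ := 2 * k * (2 * k - 1 : ℝ) ^ (n - 1)

/-- The ball of radius `n` has exactly `ballCard k n - 1/(k-1)` elements. -/
def ballCard (k n : ℕ) : ℝ := (k : ℝ) / (k - 1) * (2 * k - 1) ^ n

def ballDensity (k : ℕ) (a : ℕ → ℝ) (n : ℕ) : ℝ := (∑ i ∈ Icc 1 n, a i) / ballCard k n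

def annularDensity (k : ℕ) (a : ℕ → ℝ) (n : ℕ) : ℝ :=
  (1 / 2) * (a (n - 1) / sphereCard k (n - 1) + a n / sphereCard k n)

variable {k : ℕ}

theorem ballCard_pos (hk : 2 ≤ k) (n : ℕ) : 0 < ballCard k n := by
  have hk' : (2 : ℝ) ≤ k := by exact_mod_cast hk
  unfold ballCard
  have : (0 : ℝ) < k / (k - 1) := div_pos (by linarith) (by linarith)
  have : (0 : ℝ) < 2 * k - 1 := by linarith
  positivity

theorem ballCard_succ (hk : 2 ≤ k) (n : ℕ) :
    ballCard k (n + 1) = ballCard k n + sphereCard k (n + 1) := by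
  have hk' : (k : ℝ) - 1 ≠ 0 := by
    have : (2 : ℝ) ≤ k := by exact_mod_cast hk
    linarith
  unfold ballCard sphereCard
  rw [Nat.add_sub_cancel, pow_succ]
  field_simp
  ring

theorem sum_sphereCard_le_ballCard (hk : 2 ≤ k) (n : ℕ) :
    ∑ i ∈ Icc 1 n, sphereCard k i ≤ ballCard k n := by
  induction n with
  | zero => simpa using (ballCard_pos hk 0).le
  | succ n ih =>
    rw [sum_Icc_succ_top (Nat.le_add_left 1 n), ballCard_succ hk]
    linarith

theorem ballDensity_le_one (hk : 2 ≤ k) {a : ℕ → ℝ}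
    (ha : ∀ n, 1 ≤ n → a n ≤ sphereCard k n) (n : ℕ) : ballDensity k a n ≤ 1 := by
  refine div_le_one_of_le₀ ?_ (ballCard_pos hk n).le
  calc ∑ i ∈ Icc 1 n, a i ≤ ∑ i ∈ Icc 1 n, sphereCard k i :=
        sum_le_sum fun i hi => ha i (mem_Icc.mp hi).1
    _ ≤ ballCard k n := sum_sphereCard_le_ballCard hk n

theorem annularDensity_mul_eq (hk : 2 ≤ k) (a : ℕ → ℝ) (n : ℕ) :
    (4 * k - 4 : ℝ) / (2 * k - 1) ^ 2 * annularDensity k a (n + 2) =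
      (a (n + 1) + a (n + 2) / (2 * k - 1)) / ballCard k (n + 2) := by
  have hk' : (2 : ℝ) ≤ k := by exact_mod_cast hk
  have : (k : ℝ) - 1 ≠ 0 := by linarith
  have : (k : ℝ) ≠ 0 := by linarith
  have : (2 * k - 1 : ℝ) ≠ 0 := by linarith
  unfold annularDensity sphereCard ballCard
  simp only [Nat.add_sub_cancel, show n + 2 - 1 = n + 1 by omega, pow_succ]
  field_simp
  ring

theorem annularDensity_mul_le_ballDensity (hk : 2 ≤ k) {a : ℕ → ℝ} (ha : ∀ n, 0 ≤ a n)
    (n : ℕ) :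
    (4 * k - 4 : ℝ) / (2 * k - 1) ^ 2 * annularDensity k a (n + 2) ≤ ballDensity k a (n + 2) := by
  rw [annularDensity_mul_eq hk, ballDensity]
  refine div_le_div_of_nonneg_right ?_ (ballCard_pos hk _).le
  have hq : (1 : ℝ) ≤ 2 * k - 1 := by
    have : (2 : ℝ) ≤ k := by exact_mod_cast hk
    linarith
  have hpair : a (n + 1) + a (n + 2) ≤ ∑ i ∈ Icc 1 (n + 2), a i := by
    rw [← sum_pair (show n + 1 ≠ n + 2 by omega)]
    exact sum_le_sum_of_subset_of_nonneg (by intro i; simp; omega) fun i _ _ => ha i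
  have : a (n + 2) / (2 * k - 1) ≤ a (n + 2) := div_le_self (ha _) hq
  linarith

end FreeGroupDensity

end

open FreeGroupDensity in
theorem liminf_partial_sums_of_annular (k : ℕ) (hk : 2 ≤ k) (a : ℕ → ℝ) (δ : ℝ)
    (hnonneg : ∀ n, 0 ≤ a n)
    (hupper : ∀ n : ℕ, 1 ≤ n → a n ≤ 2 * k * (2 * k - 1 : ℝ) ^ (n - 1))
    (hann : Tendsto (fun n : ℕ =>
        (1 / 2) * (a (n - 1) / (2 * k * (2 * k - 1 : ℝ) ^ (n - 2)) +
          a n / (2 * k * (2 * k - 1 : ℝ) ^ (n - 1))))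
      atTop (nhds δ)) :
    ((4 * k - 4 : ℝ) / (2 * k - 1) ^ 2) * δ ≤
      Filter.liminf (fun n : ℕ =>
        (∑ i ∈ Finset.Icc 1 n, a i) / (((k : ℝ) / (k - 1)) * (2 * k - 1) ^ n)) atTop := by
  change Tendsto (annularDensity k a) atTop (nhds δ) at hann
  change _ ≤ liminf (ballDensity k a) atTop
  refine (hann.const_mul _).le_liminf_of_eventually_le
    (isBoundedUnder_of ⟨1, ballDensity_le_one hk hupper⟩) ?_
  filter_upwards [eventually_ge_atTop 2] with n hn
  obtain ⟨m, rfl⟩ := Nat.exists_eq_add_of_le' hn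
  exact annularDensity_mul_le_ballDensity hk hnonneg m
end

section
/- Let F be a free group of rank 2 and let H = ⟨h⟩ be an infinite cyclic subgroup of F. Then H is a retract of F if and only if there exists a free basis {a, b} of F such that h = a·c where c lies in the normal closure of b in F. -/
/-!
A retraction `φ` of `F` onto `⟨h⟩ ≅ ℤ` yields a homomorphism `f : F → ℤ` with `f h = 1`.
Running Euclid's algorithm on `(f x₀, f x₁)` by Nielsen moves gives a basis `(a, b)` with
`f a = 1` and `f b = 0`; modulo the normal closure `N` of `b` everything is a power of `a`,
so `x ≡ a ^ f x (mod N)` and in particular `h ∈ a N`. Conversely, if `h = a c` with `c ∈ N`,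
the endomorphism `a ↦ h, b ↦ 1` kills `c`, hence fixes `h`, and is a retraction onto `⟨h⟩`.
-/

section

open Multiplicative Subgroup

theorem exists_monoidHom_eq_ofAdd_one_of_retract {G : Type*} [Group G] {h : G}
    (hh : ¬IsOfFinOrder h) {φ : G →* G} (hrange : φ.range ≤ zpowers h) (hφ : φ h = h) :
    ∃ f : G →* Multiplicative ℤ, f h = ofAdd 1 := by
  have hinj : Function.Injective (zpowersHom G h) := injective_zpow_iff_not_isOfFinOrder.mpr hh
  refine ⟨(MonoidHom.ofInjective hinj).symm.toMonoidHom.comp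
    (φ.codRestrict _ fun x => hrange (MonoidHom.mem_range.2 ⟨x, rfl⟩)), ?_⟩
  rw [MonoidHom.comp_apply, MulEquiv.coe_toMonoidHom, MulEquiv.symm_apply_eq]
  exact Subtype.ext (hφ.trans (zpow_one h).symm)

theorem QuotientGroup.mk_eq_mk_zpow_of_closure_pair_eq_top {G : Type*} [Group G] {a b : G}
    (hab : closure {a, b} = ⊤) (f : G →* Multiplicative ℤ) (ha : f a = ofAdd 1) (hb : f b = 1)
    (x : G) : (x : G ⧸ normalClosure {b}) = (a : G ⧸ normalClosure {b}) ^ (f x).toAdd := by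
  have hmk : QuotientGroup.mk' (normalClosure {b}) =
      (zpowersHom _ (a : G ⧸ normalClosure {b})).comp f := by
    refine MonoidHom.eq_of_eqOn_dense hab ?_
    rintro y (rfl | rfl)
    · simp [ha]
    · simpa [hb, QuotientGroup.eq_one_iff] using subset_normalClosure (Set.mem_singleton y)
  exact DFunLike.congr_fun hmk x

namespace FreeGroup

def invFst : FreeGroup (Fin 2) ≃* FreeGroup (Fin 2) :=
  MonoidHom.toMulEquiv (lift ![(of 0)⁻¹, of 1]) (lift ![(of 0)⁻¹, of 1])
    (by ext i; fin_cases i <;> simp) (by ext i; fin_cases i <;> simp)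

@[simp] lemma invFst_of_zero : invFst (of 0) = (of 0)⁻¹ := by simp [invFst]

@[simp] lemma invFst_of_one : invFst (of 1) = of 1 := by simp [invFst]

/-- On abelianizations this is `(m, n) ↦ (n, m - q n)`, one step of Euclid's algorithm. -/
def nielsen (q : ℤ) : FreeGroup (Fin 2) ≃* FreeGroup (Fin 2) :=
  MonoidHom.toMulEquiv (lift ![of 1, of 0 * of 1 ^ (-q)]) (lift ![of 1 * of 0 ^ q, of 0])
    (by ext i; fin_cases i <;> simp [mul_assoc])
    (by ext i; fin_cases i <;> simp [mul_assoc])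

@[simp] lemma nielsen_of_zero (q : ℤ) : nielsen q (of 0) = of 1 := by simp [nielsen]

@[simp] lemma nielsen_of_one (q : ℤ) : nielsen q (of 1) = of 0 * of 1 ^ (-q) := by
  simp [nielsen]

theorem exists_mulEquiv_map_eq_ofAdd_one (f : FreeGroup (Fin 2) →* Multiplicative ℤ) {m n : ℤ}
    (hm : f (of 0) = ofAdd m) (hn : f (of 1) = ofAdd n) (hmn : IsCoprime m n) :
    ∃ e : FreeGroup (Fin 2) ≃* FreeGroup (Fin 2), f (e (of 0)) = ofAdd 1 ∧ f (e (of 1)) = 1 := by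
  induction hN : n.natAbs using Nat.strong_induction_on generalizing f m n with
  | _ N ih =>
  rcases eq_or_ne n 0 with rfl | hn0
  · rw [isCoprime_zero_right, Int.isUnit_iff] at hmn
    rcases hmn with rfl | rfl
    · exact ⟨MulEquiv.refl _, hm, hn⟩
    · exact ⟨invFst, by simp [hm], by simp [hn]⟩
  · have hlt : (m % n).natAbs < N := by
      have := Int.emod_nonneg m hn0
      have := Int.emod_lt m hn0
      omega
    have hcop : IsCoprime n (m % n) := by
      rw [Int.emod_def, sub_eq_add_neg, ← mul_neg]
      exact hmn.symm.add_mul_left_right _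
    have hg1 : f (nielsen (m / n) (of 1)) = ofAdd (m % n) := by
      rw [nielsen_of_one, _root_.map_mul, map_zpow, hm, hn, ← ofAdd_zsmul, ← ofAdd_add,
        Int.emod_def, smul_eq_mul, neg_mul, mul_comm, ← sub_eq_add_neg]
    obtain ⟨e, he⟩ :=
      ih _ hlt (f.comp (nielsen (m / n)).toMonoidHom) (by simp [hn]) hg1 hcop rfl
    exact ⟨e.trans (nielsen (m / n)), he⟩

theorem isCoprime_of_ofAdd_one_mem_range (f : FreeGroup (Fin 2) →* Multiplicative ℤ) {m n : ℤ}
    (hm : f (of 0) = ofAdd m) (hn : f (of 1) = ofAdd n) (hf : ofAdd 1 ∈ f.range) :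
    IsCoprime m n := by
  have hf_eq : f = lift ![ofAdd m, ofAdd n] := by
    ext i; fin_cases i <;> simp [hm, hn]
  rw [hf_eq, range_lift_eq_closure, Matrix.range_cons, Matrix.range_cons, Matrix.range_empty,
    Set.union_empty, Set.singleton_union, mem_closure_pair] at hf
  obtain ⟨u, v, huv⟩ := hf
  refine ⟨u, v, ?_⟩
  simpa only [toAdd_mul, toAdd_zpow, toAdd_ofAdd, smul_eq_mul] using congrArg toAdd huv

theorem closure_apply_of_zero_one_eq_top {G : Type*} [Group G] (e : FreeGroup (Fin 2) ≃* G) :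
    closure {e (of 0), e (of 1)} = ⊤ := by
  have hpair : ({e (of 0), e (of 1)} : Set G) = e.toMonoidHom '' Set.range of := by
    simp [Set.range, Fin.exists_fin_two, Set.image, Set.ext_iff, eq_comm]
  rw [hpair, ← MonoidHom.map_closure, closure_range_of, ← MonoidHom.range_eq_map,
    MonoidHom.range_eq_top]
  exact e.surjective

theorem exists_mulEquiv_inv_mul_mem_normalClosure (f : FreeGroup (Fin 2) →* Multiplicative ℤ)
    {h : FreeGroup (Fin 2)} (hf : f h = ofAdd 1) :
    ∃ e : FreeGroup (Fin 2) ≃* FreeGroup (Fin 2), (e (of 0))⁻¹ * h ∈ normalClosure {e (of 1)} := by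
  obtain ⟨e, he0, he1⟩ := exists_mulEquiv_map_eq_ofAdd_one f rfl rfl
    (isCoprime_of_ofAdd_one_mem_range f rfl rfl ⟨h, hf⟩)
  refine ⟨e, QuotientGroup.eq.1 ?_⟩
  rw [QuotientGroup.mk_eq_mk_zpow_of_closure_pair_eq_top (closure_apply_of_zero_one_eq_top e) f he0 he1 h,
    hf, toAdd_ofAdd, zpow_one]

theorem exists_retract_zpowers_of_mem_normalClosure {G : Type*} [Group G]
    (e : FreeGroup (Fin 2) ≃* G) {c : G} (hc : c ∈ normalClosure {e (of 1)}) :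
    ∃ φ : G →* G, φ.range = zpowers (e (of 0) * c) ∧
      ∀ x ∈ zpowers (e (of 0) * c), φ x = x := by
  set h := e (of 0) * c
  let φ : G →* G := (lift ![h, 1]).comp e.symm.toMonoidHom
  have hφb : φ (e (of 1)) = 1 := by simp [φ]
  have hφc : φ c = 1 := normalClosure_le_normal (N := φ.ker) (by simpa using hφb) hc
  have hφh : φ h = h := by
    simp only [h, _root_.map_mul, hφc, mul_one]
    simp [φ, h]
  refine ⟨φ, le_antisymm ?_ (zpowers_le.2 ⟨h, hφh⟩), ?_⟩
  · rintro y ⟨x, rfl⟩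
    refine range_lift_le ?_ ⟨e.symm x, rfl⟩
    rintro _ ⟨i, rfl⟩
    fin_cases i
    · exact mem_zpowers h
    · exact one_mem _
  · rintro x ⟨k, rfl⟩
    simp [hφh]

end FreeGroup

end

theorem cyclic_retract_iff (h : FreeGroup (Fin 2))
    (hinf : (Subgroup.zpowers h : Set (FreeGroup (Fin 2))).Infinite) :
    (∃ φ : FreeGroup (Fin 2) →* FreeGroup (Fin 2),
        φ.range = Subgroup.zpowers h ∧ ∀ x ∈ Subgroup.zpowers h, φ x = x) ↔
    (∃ a b : FreeGroup (Fin 2),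
        (∃ e : FreeGroup (Fin 2) ≃* FreeGroup (Fin 2),
          e (FreeGroup.of 0) = a ∧ e (FreeGroup.of 1) = b) ∧
        ∃ c ∈ Subgroup.normalClosure {b}, h = a * c) := by
  constructor
  · rintro ⟨φ, hrange, hid⟩
    obtain ⟨f, hf⟩ := exists_monoidHom_eq_ofAdd_one_of_retract (infinite_zpowers.1 hinf)
      hrange.le (hid h (Subgroup.mem_zpowers h))
    obtain ⟨e, he⟩ := FreeGroup.exists_mulEquiv_inv_mul_mem_normalClosure f hf
    exact ⟨_, _, ⟨e, rfl, rfl⟩, _, he, (mul_inv_cancel_left _ _).symm⟩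
  · rintro ⟨a, b, ⟨e, rfl, rfl⟩, c, hc, rfl⟩
    exact FreeGroup.exists_retract_zpowers_of_mem_normalClosure e hc
end

section
/- The strict asymptotic density with respect to the sup-norm of the set of even visible points in ℤ² — points (x,y) with gcd(x,y) = 1 and |x| + |y| even — equals 1/(3ζ(2)) = 2/π². -/
/-!
An even visible point has both coordinates odd, so up to the four choices of signs the even
visible points in the box of radius `n` are the coprime pairs of odd numbers in `[1, n]`.
Möbius inversion counts these as `∑ d, μ d * N d n ^ 2`, where `N d n`, the number of odd
multiples of `d` up to `n`, is `0` for even `d` and `≈ n / (2d)` for odd `d`. Dominated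
convergence turns `n⁻² ∑ d, μ d * N d n ^ 2` into `(1/4) ∑_{d odd} μ d / d ^ 2`, and that series is
`1 / L(χ₀, 2) = 1 / ((1 - 2⁻²) ζ(2)) = 8 / π ^ 2` for the trivial character `χ₀` mod `2`.
-/

open Filter ArithmeticFunction Finset Real Topology
open scoped ArithmeticFunction.Moebius LSeries.notation

lemma dirichletCharacter_one_mod_two_apply {R : Type*} [CommMonoidWithZero R] [Nontrivial R]
    (n : ℕ) : (1 : DirichletCharacter R 2) n = if Odd n then 1 else 0 := by
  split_ifs with h
  · rw [ZMod.natCast_eq_one_iff_odd.mpr h, map_one]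
  · rw [(ZMod.natCast_eq_zero_iff_even).mpr (Nat.not_odd_iff_even.mp h), MulChar.map_zero]

lemma LSeries_moebius_odd {s : ℂ} (hs : 1 < s.re) :
    L (fun n ↦ if Odd n then (μ n : ℂ) else 0) s = 1 / ((1 - 2 ^ (-s)) * riemannZeta s) := by
  have h := DirichletCharacter.LSeries.mul_mu_eq_one (1 : DirichletCharacter ℂ 2) hs
  rw [← DirichletCharacter.LFunction_eq_LSeries _ hs,
    ← DirichletCharacter.LFunctionTrivChar,
    DirichletCharacter.LFunctionTrivChar_eq_mul_riemannZeta (fun h ↦ by simp [h] at hs),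
    Nat.Prime.primeFactors Nat.prime_two, prod_singleton] at h
  have hχμ : ((fun n : ℕ ↦ (1 : DirichletCharacter ℂ 2) n) * fun n ↦ (μ n : ℂ)) =
      fun n ↦ if Odd n then (μ n : ℂ) else 0 := by
    ext n
    simp [dirichletCharacter_one_mod_two_apply]
  rw [hχμ, Nat.cast_ofNat] at h
  exact eq_one_div_of_mul_eq_one_right h

lemma tsum_moebius_odd_div_sq :
    ∑' d : ℕ, (if Odd d then (μ d : ℝ) / d ^ 2 else 0) = 8 / π ^ 2 := by
  have h := LSeries_moebius_odd (s := 2) (by norm_num)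
  rw [riemannZeta_two] at h
  apply Complex.ofReal_injective
  rw [Complex.ofReal_tsum]
  convert h using 1
  · refine tsum_congr fun d ↦ ?_
    rcases eq_or_ne d 0 with rfl | hd
    · simp
    · rw [LSeries.term_of_ne_zero hd]
      split_ifs <;> simp
  · norm_num [Complex.cpow_neg]
    field_simp
    ring

lemma sum_divisors_moebius (n : ℕ) : ∑ d ∈ n.divisors, μ d = if n = 1 then 1 else 0 := by
  rw [← coe_mul_zeta_apply, moebius_mul_coe_zeta, one_apply]

lemma Nat.divisors_gcd_eq_filter_Ioc {a N : ℕ} (ha : a ∈ Ioc 0 N) (b : ℕ) :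
    (a.gcd b).divisors = {d ∈ Ioc 0 N | d ∣ a ∧ d ∣ b} := by
  have ha' := mem_Ioc.mp ha
  ext d
  simp only [Nat.mem_divisors, Nat.dvd_gcd_iff, mem_filter, mem_Ioc]
  constructor
  · rintro ⟨⟨hda, hdb⟩, -⟩
    exact ⟨⟨Nat.pos_of_dvd_of_pos hda ha'.1, (Nat.le_of_dvd ha'.1 hda).trans ha'.2⟩, hda, hdb⟩
  · rintro ⟨-, hda, hdb⟩
    exact ⟨⟨hda, hdb⟩, Nat.gcd_ne_zero_left ha'.1.ne'⟩

theorem card_filter_coprime_eq_sum_moebius {S : Finset ℕ} {N : ℕ} (hS : S ⊆ Ioc 0 N)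
    (T : Finset ℕ) :
    (#{p ∈ S ×ˢ T | p.1.Coprime p.2} : ℤ) =
      ∑ d ∈ Ioc 0 N, μ d * #{a ∈ S | d ∣ a} * #{b ∈ T | d ∣ b} := by
  calc (#{p ∈ S ×ˢ T | p.1.Coprime p.2} : ℤ)
      = ∑ p ∈ S ×ˢ T, ∑ d ∈ (p.1.gcd p.2).divisors, μ d := by
        simp_rw [sum_divisors_moebius, ← Nat.coprime_iff_gcd_eq_one]
        rw [card_filter]; push_cast; rfl
    _ = ∑ p ∈ S ×ˢ T, ∑ d ∈ Ioc 0 N, if d ∣ p.1 ∧ d ∣ p.2 then μ d else 0 := by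
        refine sum_congr rfl fun p hp ↦ ?_
        rw [Nat.divisors_gcd_eq_filter_Ioc (hS (mem_product.mp hp).1), sum_filter]
    _ = ∑ d ∈ Ioc 0 N, μ d * #{a ∈ S | d ∣ a} * #{b ∈ T | d ∣ b} := by
        rw [sum_comm]
        refine sum_congr rfl fun d _ ↦ ?_
        rw [← sum_filter, sum_const, filter_product, card_product]
        ring

def oddUpTo (n : ℕ) : Finset ℕ := {x ∈ Ioc 0 n | Odd x}

lemma oddUpTo_subset_Ioc (n : ℕ) : oddUpTo n ⊆ Ioc 0 n := filter_subset _ _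

lemma card_oddUpTo_dvd_of_even {d : ℕ} (hd : Even d) (n : ℕ) : #{x ∈ oddUpTo n | d ∣ x} = 0 := by
  rw [card_eq_zero, filter_eq_empty_iff]
  intro x hx hdx
  exact Nat.not_even_iff_odd.mpr (mem_filter.mp hx).2 (even_iff_two_dvd.mpr (hd.two_dvd.trans hdx))

lemma card_oddUpTo_dvd_add_of_odd {d : ℕ} (hd : Odd d) (n : ℕ) :
    #{x ∈ oddUpTo n | d ∣ x} + n / (2 * d) = n / d := by
  have hsplit : {x ∈ oddUpTo n | d ∣ x} = {x ∈ Ioc 0 n | d ∣ x} \ {x ∈ Ioc 0 n | 2 * d ∣ x} := by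
    ext x
    simp only [oddUpTo, Finset.mem_sdiff, mem_filter, ← Nat.not_even_iff_odd, even_iff_two_dvd]
    have : 2 ∣ x → d ∣ x → 2 * d ∣ x :=
      (Nat.coprime_two_left.mpr hd).mul_dvd_of_dvd_of_dvd
    have : 2 * d ∣ x → d ∣ x := (Dvd.intro_left 2 rfl).trans
    have : 2 * d ∣ x → 2 ∣ x := (Dvd.intro d rfl).trans
    tauto
  rw [hsplit, ← Nat.Ioc_filter_dvd_card_eq_div, ← Nat.Ioc_filter_dvd_card_eq_div]
  exact card_sdiff_add_card_eq_card (monotone_filter_right _ fun _ _ ↦ (Dvd.intro_left 2 rfl).trans)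

lemma card_oddUpTo_dvd_le (n d : ℕ) : #{x ∈ oddUpTo n | d ∣ x} ≤ n / d := by
  rw [← Nat.Ioc_filter_dvd_card_eq_div]
  exact card_le_card (filter_subset_filter _ (filter_subset _ _))

lemma tendsto_nat_div_const_div_atTop (d : ℕ) :
    Tendsto (fun n : ℕ ↦ ((n / d : ℕ) : ℝ) / n) atTop (𝓝 (1 / d)) := by
  have h := (tendsto_nat_floor_mul_div_atTop (one_div_nonneg.mpr (d.cast_nonneg : (0:ℝ) ≤ d))).comp
    tendsto_natCast_atTop_atTop
  refine h.congr fun n ↦ ?_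
  simp [← div_eq_inv_mul, Nat.floor_div_eq_div]

lemma card_oddUpTo_dvd_div_le (n d : ℕ) : (#{x ∈ oddUpTo n | d ∣ x} : ℝ) / n ≤ 1 / d := by
  have h : (#{x ∈ oddUpTo n | d ∣ x} : ℝ) ≤ n / d :=
    (Nat.cast_le.mpr (card_oddUpTo_dvd_le n d)).trans Nat.cast_div_le
  rcases eq_or_ne n 0 with rfl | hn
  · simp
  · calc (#{x ∈ oddUpTo n | d ∣ x} : ℝ) / n ≤ n / d / n := by gcongr
      _ = 1 / d := by field_simp

lemma tendsto_card_oddUpTo_dvd_div (d : ℕ) :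
    Tendsto (fun n : ℕ ↦ (#{x ∈ oddUpTo n | d ∣ x} : ℝ) / n) atTop
      (𝓝 (if Odd d then 1 / (2 * d) else 0)) := by
  split_ifs with hd
  · have h := (tendsto_nat_div_const_div_atTop d).sub (tendsto_nat_div_const_div_atTop (2 * d))
    have hlim : (1 : ℝ) / d - 1 / (2 * d : ℕ) = 1 / (2 * d) := by push_cast; field_simp; ring
    rw [hlim] at h
    refine h.congr fun n ↦ ?_
    have hcount : (#{x ∈ oddUpTo n | d ∣ x} : ℝ) + (n / (2 * d) : ℕ) = (n / d : ℕ) := by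
      exact_mod_cast card_oddUpTo_dvd_add_of_odd hd n
    rw [← sub_div, ← hcount, add_sub_cancel_right]
  · simp [card_oddUpTo_dvd_of_even (Nat.not_odd_iff_even.mp hd)]

lemma card_coprime_oddUpTo_div_sq_eq_tsum (n : ℕ) :
    (#{p ∈ oddUpTo n ×ˢ oddUpTo n | p.1.Coprime p.2} : ℝ) / n ^ 2 =
      ∑' d, (μ d : ℝ) * ((#{x ∈ oddUpTo n | d ∣ x} : ℝ) / n) ^ 2 := by
  have h := congrArg (Int.cast : ℤ → ℝ)
    (card_filter_coprime_eq_sum_moebius (oddUpTo_subset_Ioc n) (oddUpTo n))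
  push_cast at h
  rw [h, sum_div, tsum_eq_sum (s := Ioc 0 n)]
  · refine sum_congr rfl fun d _ ↦ ?_
    ring
  · intro d hd
    have : n / d = 0 := by
      rcases Nat.eq_zero_or_pos d with rfl | hd0
      · exact Nat.div_zero n
      · exact Nat.div_eq_of_lt (by simp_all)
    simp [Nat.eq_zero_of_le_zero (this ▸ card_oddUpTo_dvd_le n d)]

theorem tendsto_card_coprime_oddUpTo_div_sq :
    Tendsto (fun n : ℕ ↦ (#{p ∈ oddUpTo n ×ˢ oddUpTo n | p.1.Coprime p.2} : ℝ) / n ^ 2) atTop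
      (𝓝 (2 / π ^ 2)) := by
  have hval : ∑' d : ℕ, (μ d : ℝ) * (if Odd d then (1 : ℝ) / (2 * d) else 0) ^ 2 = 2 / π ^ 2 := by
    have h (d : ℕ) : (μ d : ℝ) * (if Odd d then (1 : ℝ) / (2 * d) else 0) ^ 2 =
        1 / 4 * (if Odd d then (μ d : ℝ) / d ^ 2 else 0) := by
      split_ifs <;> ring
    rw [tsum_congr h, tsum_mul_left, tsum_moebius_odd_div_sq]
    ring
  have hbound (n d : ℕ) : ‖(μ d : ℝ) * ((#{x ∈ oddUpTo n | d ∣ x} : ℝ) / n) ^ 2‖ ≤ 1 / d ^ 2 := by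
    have hc : 0 ≤ (#{x ∈ oddUpTo n | d ∣ x} : ℝ) / n := by positivity
    have hμ : ‖(μ d : ℝ)‖ ≤ 1 := by
      rw [Real.norm_eq_abs, ← Int.cast_abs]
      exact_mod_cast abs_moebius_le_one
    rw [norm_mul, norm_pow, Real.norm_of_nonneg hc, ← one_div_pow]
    exact (mul_le_of_le_one_left (by positivity) hμ).trans
      (pow_le_pow_left₀ hc (card_oddUpTo_dvd_div_le n d) 2)
  simp_rw [card_coprime_oddUpTo_div_sq_eq_tsum, ← hval]
  exact tendsto_tsum_of_dominated_convergence (Real.summable_one_div_nat_pow.mpr one_lt_two)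
    (fun d ↦ ((tendsto_card_oddUpTo_dvd_div d).pow 2).const_mul _) (.of_forall hbound)

lemma sum_Icc_sum_Icc_of_even {M : Type*} [AddCommGroup M] (f : ℤ → ℤ → M)
    (hf₁ : ∀ x y, f (-x) y = f x y) (hf₂ : ∀ x y, f x (-y) = f x y)
    (h₁ : ∀ y, f 0 y = 0) (h₂ : ∀ x, f x 0 = 0) (n : ℕ) :
    ∑ x ∈ Icc (-n : ℤ) n, ∑ y ∈ Icc (-n : ℤ) n, f x y =
      4 • ∑ a ∈ range (n + 1), ∑ b ∈ range (n + 1), f a b := by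
  have hinner (x : ℤ) : ∑ y ∈ Icc (-n : ℤ) n, f x y = 2 • ∑ b ∈ range (n + 1), f x b := by
    rw [sum_Icc_of_even_eq_range (fun y ↦ hf₂ x y), h₂, sub_zero]
  simp_rw [hinner]
  rw [sum_Icc_of_even_eq_range (fun x ↦ by simp only [hf₁])]
  simp [h₁, ← smul_sum, smul_smul]

lemma coprime_and_even_add_iff {a b : ℕ} :
    a.Coprime b ∧ Even (a + b) ↔ a.Coprime b ∧ Odd a ∧ Odd b := by
  refine and_congr_right fun hab ↦ ?_
  rw [Nat.even_add, ← Nat.not_even_iff_odd, ← Nat.not_even_iff_odd]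
  have : ¬ (Even a ∧ Even b) := fun ⟨ha, hb⟩ ↦
    Nat.not_even_one (hab ▸ even_iff_two_dvd.mpr (Nat.dvd_gcd ha.two_dvd hb.two_dvd))
  tauto

theorem natCard_evenVisible_eq (n : ℕ) :
    Nat.card {p : ℤ × ℤ // |p.1| ≤ (n : ℤ) ∧ |p.2| ≤ (n : ℤ) ∧
      Int.gcd p.1 p.2 = 1 ∧ Even (|p.1| + |p.2|)} =
      4 * #{p ∈ oddUpTo n ×ˢ oddUpTo n | p.1.Coprime p.2} := by
  have hmem (p : ℤ × ℤ) : p ∈ {p ∈ Icc (-n : ℤ) n ×ˢ Icc (-n : ℤ) n |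
        p.1.natAbs.Coprime p.2.natAbs ∧ Odd p.1.natAbs ∧ Odd p.2.natAbs} ↔
      |p.1| ≤ n ∧ |p.2| ≤ n ∧ Int.gcd p.1 p.2 = 1 ∧ Even (|p.1| + |p.2|) := by
    rw [mem_filter, mem_product, mem_Icc, mem_Icc, ← abs_le, ← abs_le, ← coprime_and_even_add_iff,
      Int.abs_eq_natAbs, Int.abs_eq_natAbs, ← Nat.cast_add, Int.even_coe_nat, Int.gcd_eq_natAbs,
      and_assoc]
  have hodd : {p ∈ oddUpTo n ×ˢ oddUpTo n | p.1.Coprime p.2} =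
      {p ∈ range (n + 1) ×ˢ range (n + 1) | p.1.Coprime p.2 ∧ Odd p.1 ∧ Odd p.2} := by
    ext ⟨a, b⟩
    simp only [oddUpTo, mem_filter, mem_product, mem_Ioc, mem_range, Nat.lt_succ_iff]
    have : Odd a → 0 < a := Odd.pos
    have : Odd b → 0 < b := Odd.pos
    tauto
  rw [Nat.subtype_card _ hmem, hodd]
  zify
  simp only [card_filter, Nat.cast_sum, sum_product]
  rw [sum_Icc_sum_Icc_of_even] <;> simp

theorem density_even_visible_Z2 :
    Tendsto (fun n : ℕ =>
        (Nat.card {p : ℤ × ℤ // |p.1| ≤ (n : ℤ) ∧ |p.2| ≤ (n : ℤ) ∧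
            Int.gcd p.1 p.2 = 1 ∧ Even (|p.1| + |p.2|)} : ℝ) / ((2 * (n : ℝ) + 1) ^ 2))
      atTop (nhds (2 / Real.pi ^ 2)) := by
  have hratio : Tendsto (fun n : ℕ ↦ ((n : ℝ) / (n + 1 / 2)) ^ 2) atTop (𝓝 1) := by
    simpa using (tendsto_natCast_div_add_atTop (1 / 2 : ℝ)).pow 2
  have h := tendsto_card_coprime_oddUpTo_div_sq.mul hratio
  rw [mul_one] at h
  refine h.congr' ((eventually_ne_atTop 0).mono fun n hn ↦ ?_)
  dsimp only
  rw [natCard_evenVisible_eq]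
  push_cast
  field_simp
  ring
end

section
/- Let F be a free group of finite rank k ≥ 2 with word length, and let P be the set of all nontrivial elements of F that are proper powers (w = u^n for some n ≥ 2). Then the number of elements of P of length exactly n, divided by the total number 2k(2k−1)^{n−1} of elements of length n, tends to 0 exponentially fast as n → ∞. -/
/-!
If `u` has reduced word `V C V⁻¹` with `C` cyclically reduced, then the reduced word of `u ^ m`
is `V C^m V⁻¹`, of length `n = 2|V| + m|C|`. For `m ≥ 2` we get `|V| + |C| ≤ n / 2`, so the word is
determined by `|V|`, `|C|` and its first `n / 2` letters. Hence there are at most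
`(n/2 + 1)² (2k)^(n/2)` proper powers of length `n`, which against the `2k(2k-1)^(n-1)` words of
length `n` decays like `n² (√(2k) / (2k - 1))^n`; and `√(2k) < 2k - 1` as soon as `k ≥ 2`.
-/

open List

namespace FreeGroup

section Words

variable {α : Type*}

def powWord (V C : List (α × Bool)) (m : ℕ) : List (α × Bool) :=
  V ++ (replicate m C).flatten ++ invRev V

theorem length_powWord (V C : List (α × Bool)) (m : ℕ) :
    (powWord V C m).length = 2 * V.length + m * C.length := by
  simp only [powWord, invRev, length_append, length_flatten, map_replicate, sum_replicate,
    smul_eq_mul, length_reverse, length_map]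
  ring

theorem take_powWord {V C : List (α × Bool)} {m : ℕ} (hm : m ≠ 0) :
    (powWord V C m).take (V.length + C.length) = V ++ C := by
  obtain ⟨m, rfl⟩ := Nat.exists_eq_add_one_of_ne_zero hm
  simp [powWord, replicate_succ, append_assoc, take_append]

theorem powWord_eq_of_take_eq {V V' C C' : List (α × Bool)} {m m' ℓ : ℕ} (hm : m ≠ 0)
    (hm' : m' ≠ 0) (hV : V.length = V'.length) (hC : C.length = C'.length)
    (hℓ : V.length + C.length ≤ ℓ) (hlen : (powWord V C m).length = (powWord V' C' m').length)
    (htake : (powWord V C m).take ℓ = (powWord V' C' m').take ℓ) :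
    powWord V C m = powWord V' C' m' := by
  have hVC : V ++ C = V' ++ C' := by
    rw [← take_powWord hm, ← take_powWord hm', ← hV, ← hC, ← min_eq_left hℓ, ← take_take,
      htake, take_take]
  obtain ⟨rfl, rfl⟩ := append_inj hVC hV
  by_cases hC : C = []
  · simp [powWord, hC]
  · have : m = m' := by
      rw [length_powWord, length_powWord] at hlen
      exact Nat.eq_of_mul_eq_mul_right (length_pos_iff.2 hC) (by omega)
    rw [this]

end Words

variable {α : Type*} [DecidableEq α]

theorem toWord_pow_eq_powWord (x : FreeGroup α) {m : ℕ} (hm : m ≠ 0) :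
    (x ^ m).toWord =
      powWord (reduceCyclically.conjugator x.toWord) (reduceCyclically x.toWord) m := by
  rw [toWord_pow, reduceCyclically.reduce_flatten_replicate isReduced_toWord, if_neg hm, powWord]

theorem card_powers_of_length_le [Fintype α] (n : ℕ) :
    Nat.card {w : FreeGroup α // (∃ (u : FreeGroup α) (m : ℕ), 2 ≤ m ∧ w = u ^ m) ∧
        w.toWord.length = n} ≤ (n / 2 + 1) ^ 2 * (2 * Fintype.card α) ^ (n / 2) := by
  set T := {w : FreeGroup α // (∃ (u : FreeGroup α) (m : ℕ), 2 ≤ m ∧ w = u ^ m) ∧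
    w.toWord.length = n}
  have hword : ∀ w : T, ∃ (V C : List (α × Bool)) (m : ℕ), 2 ≤ m ∧ w.1.toWord = powWord V C m := by
    rintro ⟨-, ⟨u, m, hm, rfl⟩, -⟩
    exact ⟨_, _, m, hm, toWord_pow_eq_powWord u (by omega)⟩
  choose V C m hm hw using hword
  have hprefix : ∀ w : T, (V w).length + (C w).length ≤ n / 2 := by
    intro w
    have hlen := length_powWord (V w) (C w) (m w)
    rw [← hw, w.2.2] at hlen
    have := Nat.mul_le_mul_right (C w).length (hm w)
    omega
  let f : T → Fin (n / 2 + 1) × Fin (n / 2 + 1) × List.Vector (α × Bool) (n / 2) := fun w =>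
    (⟨(V w).length, by grind⟩, ⟨(C w).length, by grind⟩,
      ⟨w.1.toWord.take (n / 2), by rw [length_take, w.2.2]; omega⟩)
  have hf : Function.Injective f := by
    intro w w' h
    simp only [f, Prod.ext_iff, Fin.ext_iff] at h
    obtain ⟨hV, hC, htake⟩ := h
    replace htake : w.1.toWord.take (n / 2) = w'.1.toWord.take (n / 2) :=
      congrArg List.Vector.toList htake
    have hlen : (powWord (V w) (C w) (m w)).length = (powWord (V w') (C w') (m w')).length := by
      rw [← hw, ← hw, w.2.2, w'.2.2]
    rw [hw, hw] at htake
    refine Subtype.ext (toWord_injective ?_)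
    rw [hw, hw]
    exact powWord_eq_of_take_eq (by grind) (by grind) hV hC (hprefix w) hlen htake
  calc Nat.card T ≤ _ := Nat.card_le_card_of_injective f hf
    _ = (n / 2 + 1) ^ 2 * (2 * Fintype.card α) ^ (n / 2) := by
      simp only [Nat.card_eq_fintype_card, Fintype.card_prod, Fintype.card_fin, card_vector,
        Fintype.card_bool]
      ring

end FreeGroup

theorem exists_pow_mul_pow_le_mul_pow (k : ℕ) {r : ℝ} (h0 : 0 ≤ r) (h1 : r < 1) :
    ∃ C q : ℝ, 0 ≤ q ∧ q < 1 ∧ ∀ n : ℕ, (n : ℝ) ^ k * r ^ n ≤ C * q ^ n := by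
  have hq : |√r| < 1 := by
    rwa [abs_of_nonneg (Real.sqrt_nonneg r), Real.sqrt_lt' one_pos, one_pow]
  obtain ⟨C, hC⟩ := (tendsto_pow_const_mul_const_pow_of_abs_lt_one k hq).bddAbove_range
  refine ⟨C, √r, Real.sqrt_nonneg r, (abs_lt.1 hq).2, fun n => ?_⟩
  calc (n : ℝ) ^ k * r ^ n = ((n : ℝ) ^ k * √r ^ n) * √r ^ n := by
        rw [mul_assoc, ← mul_pow, Real.mul_self_sqrt h0]
    _ ≤ C * √r ^ n := by gcongr; exact hC (Set.mem_range_self n)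

theorem pow_div_two_div_le {x : ℝ} (hx : 1 < x) {n : ℕ} (hn : n ≠ 0) :
    x ^ (n / 2) / (x * (x - 1) ^ (n - 1)) ≤ (√x / (x - 1)) ^ n := by
  have hnum : x ^ (n / 2) ≤ √x ^ n :=
    calc x ^ (n / 2) = √x ^ (2 * (n / 2)) := by rw [pow_mul, Real.sq_sqrt (by linarith)]
      _ ≤ √x ^ n := pow_le_pow_right₀ (Real.one_le_sqrt.2 hx.le) (Nat.mul_div_le n 2)
  have hden : (x - 1) ^ n ≤ x * (x - 1) ^ (n - 1) := by
    obtain ⟨j, rfl⟩ := Nat.exists_eq_add_one_of_ne_zero hn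
    rw [pow_succ', Nat.add_sub_cancel]
    gcongr
    linarith
  rw [div_pow]
  gcongr

theorem sqrt_div_sub_one_lt_one {x : ℝ} (hx : 3 ≤ x) : √x / (x - 1) < 1 := by
  rw [div_lt_one (by linarith), Real.sqrt_lt' (by linarith)]
  nlinarith

theorem proper_powers_exponentially_negligible (k : ℕ) (hk : 2 ≤ k) :
    ∃ C : ℝ, ∃ q : ℝ, 0 ≤ q ∧ q < 1 ∧ ∀ n : ℕ, 1 ≤ n →
      (Nat.card {w : FreeGroup (Fin k) // w ≠ 1 ∧
          (∃ (u : FreeGroup (Fin k)) (m : ℕ), 2 ≤ m ∧ w = u ^ m) ∧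
          (FreeGroup.toWord w).length = n} : ℝ) /
        (2 * k * (2 * k - 1 : ℝ) ^ (n - 1)) ≤ C * q ^ n := by
  have hk' : (3 : ℝ) ≤ 2 * k := by norm_cast; omega
  obtain ⟨C, q, hq0, hq1, hC⟩ := exists_pow_mul_pow_le_mul_pow 2 (r := √(2 * k) / (2 * k - 1))
    (div_nonneg (Real.sqrt_nonneg _) (by linarith)) (sqrt_div_sub_one_lt_one hk')
  refine ⟨C, q, hq0, hq1, fun n hn => ?_⟩
  have hcount : Nat.card {w : FreeGroup (Fin k) // w ≠ 1 ∧
      (∃ (u : FreeGroup (Fin k)) (m : ℕ), 2 ≤ m ∧ w = u ^ m) ∧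
      (FreeGroup.toWord w).length = n} ≤ n ^ 2 * (2 * k) ^ (n / 2) := by
    calc _ = _ := Nat.card_congr <| Equiv.subtypeEquivRight fun w =>
          ⟨And.right, fun h => ⟨by rintro rfl; rw [FreeGroup.toWord_one, length_nil] at h; omega, h⟩⟩
      _ ≤ (n / 2 + 1) ^ 2 * (2 * Fintype.card (Fin k)) ^ (n / 2) :=
          FreeGroup.card_powers_of_length_le n
      _ ≤ n ^ 2 * (2 * k) ^ (n / 2) := by rw [Fintype.card_fin]; gcongr; omega
  calc _ ≤ (n ^ 2 * (2 * k) ^ (n / 2) : ℕ) / (2 * k * (2 * k - 1 : ℝ) ^ (n - 1)) :=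
        div_le_div_of_nonneg_right (by exact_mod_cast hcount)
          (mul_nonneg (by linarith) (pow_nonneg (by linarith) _))
    _ = (n : ℝ) ^ 2 * ((2 * k) ^ (n / 2) / (2 * k * (2 * k - 1) ^ (n - 1))) := by
        push_cast; ring
    _ ≤ (n : ℝ) ^ 2 * (√(2 * k) / (2 * k - 1)) ^ n := by
        gcongr; exact pow_div_two_div_le (by linarith) (by omega)
    _ ≤ C * q ^ n := hC n
end

section
/- No finite sum of distinct terms of the form 1/n² (n a positive integer) lies in the open interval (π²/6 − 1, 1). Consequently, no finite union of the sets U_t of t-visible points in ℤ² can have asymptotic density lying strictly between 1 − 6/π² and 6/π². -/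
/-!
Since `∑_{n ≥ 1} 1/n² = π²/6`, a finite sum of distinct terms `1/n²` is at least `1` if it
uses `n = 1` and at most `π²/6 - 1` otherwise. Densities of unions of the `U_t` are such sums
scaled by `6/π²`, and this scaling maps `(π²/6 - 1, 1)` onto `(1 - 6/π², 6/π²)`.
-/

open Real Finset

lemma sum_one_div_sq_le_pi_sq_div_six_sub_one {s : Finset ℕ} (h1 : 1 ∉ s) :
    ∑ n ∈ s, (1 : ℝ) / (n : ℝ) ^ 2 ≤ π ^ 2 / 6 - 1 := by
  have h := sum_le_hasSum (insert 1 s) (fun n _ => by positivity) hasSum_zeta_two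
  rw [sum_insert h1, Nat.cast_one, one_pow, div_one] at h
  linarith

lemma one_le_sum_one_div_sq {s : Finset ℕ} (h1 : 1 ∈ s) :
    1 ≤ ∑ n ∈ s, (1 : ℝ) / (n : ℝ) ^ 2 := by
  have h := single_le_sum (f := fun n : ℕ => (1 : ℝ) / (n : ℝ) ^ 2)
    (fun n _ => by positivity) h1
  rwa [Nat.cast_one, one_pow, div_one] at h

lemma sum_one_div_sq_notMem_Ioo (s : Finset ℕ) :
    ∑ n ∈ s, (1 : ℝ) / (n : ℝ) ^ 2 ∉ Set.Ioo (π ^ 2 / 6 - 1) 1 := by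
  rintro ⟨hlo, hhi⟩
  by_cases h1 : 1 ∈ s
  · exact (one_le_sum_one_div_sq h1).not_gt hhi
  · exact (sum_one_div_sq_le_pi_sq_div_six_sub_one h1).not_gt hlo

lemma mem_Ioo_of_mul_mem_Ioo_one_sub {c x : ℝ} (hc : 0 < c)
    (h : c * x ∈ Set.Ioo (1 - c) c) :
    x ∈ Set.Ioo (c⁻¹ - 1) 1 := by
  obtain ⟨hlo, hhi⟩ := h
  refine ⟨?_, lt_of_mul_lt_mul_left (by linarith) hc.le⟩
  rw [sub_lt_iff_lt_add, inv_lt_iff_one_lt_mul₀ hc]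
  linarith

lemma sum_six_div_pi_sq_mul_sq (s : Finset ℕ) :
    ∑ t ∈ s, 6 / (π ^ 2 * (t : ℝ) ^ 2) = 6 / π ^ 2 * ∑ t ∈ s, (1 : ℝ) / (t : ℝ) ^ 2 := by
  rw [mul_sum]
  refine sum_congr rfl fun t _ => ?_
  rw [mul_one_div, div_div]

theorem egyptian_squares_gap :
    (∀ s : Finset ℕ, (∀ n ∈ s, 1 ≤ n) →
      (∑ n ∈ s, (1 : ℝ) / (n : ℝ) ^ 2) ∉ Set.Ioo (Real.pi ^ 2 / 6 - 1) 1) ∧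
    (∀ s : Finset ℕ, (∀ t ∈ s, 1 ≤ t) →
      (∑ t ∈ s, 6 / (Real.pi ^ 2 * (t : ℝ) ^ 2)) ∉
        Set.Ioo (1 - 6 / Real.pi ^ 2) (6 / Real.pi ^ 2)) := by
  refine ⟨fun s _ => sum_one_div_sq_notMem_Ioo s, fun s _ hmem => ?_⟩
  rw [sum_six_div_pi_sq_mul_sq] at hmem
  have h := mem_Ioo_of_mul_mem_Ioo_one_sub (by positivity) hmem
  rw [inv_div] at h
  exact sum_one_div_sq_notMem_Ioo s h
end

section
/- Let H be the subgroup of the free group F(a,b) generated by a and b[a,b]³. Then H has infinite index in F(a,b), while its image under the abelianization map α: F(a,b) → ℤ² is all of ℤ². -/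
set_option maxHeartbeats 1000000 in
theorem infinite_index_subgroup_with_full_abelianization :
    letI a : FreeGroup (Fin 2) := FreeGroup.of 0
    letI b : FreeGroup (Fin 2) := FreeGroup.of 1
    letI H : Subgroup (FreeGroup (Fin 2)) :=
      Subgroup.closure {a, b * (a * b * a⁻¹ * b⁻¹) ^ 3}
    letI α : FreeGroup (Fin 2) →* Multiplicative (ℤ × ℤ) :=
      FreeGroup.lift (fun i => Multiplicative.ofAdd (if i = 0 then ((1, 0) : ℤ × ℤ) else (0, 1)))
    H.index = 0 ∧ H.map α = ⊤ := by
  classical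
  set a : FreeGroup (Fin 2) := FreeGroup.of 0 with ha
  set b : FreeGroup (Fin 2) := FreeGroup.of 1 with hb
  set H : Subgroup (FreeGroup (Fin 2)) :=
    Subgroup.closure {a, b * (a * b * a⁻¹ * b⁻¹) ^ 3} with hH
  set α : FreeGroup (Fin 2) →* Multiplicative (ℤ × ℤ) :=
    FreeGroup.lift (fun i => Multiplicative.ofAdd (if i = 0 then ((1, 0) : ℤ × ℤ) else (0, 1))) with hα
  constructor
  · -- infinite index via an action on ℤ
    let π : Equiv.Perm ℤ := Equiv.swap (-4) (-1) * Equiv.swap (-3) (-2)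
    let τ : Equiv.Perm ℤ := Equiv.addRight 1
    let φ : FreeGroup (Fin 2) →* Equiv.Perm ℤ :=
      FreeGroup.lift (fun i => if i = 0 then π else τ)
    letI : MulAction (FreeGroup (Fin 2)) ℤ := MulAction.compHom ℤ φ
    have hφa : φ a = π := by simp [φ, a]
    have hφb : φ b = τ := by simp [φ, b]
    have hτn : ∀ (n : ℤ) (x : ℤ), (τ ^ n) x = x + n := by
      intro n x
      have : τ ^ n = Equiv.addRight n := by
        ext y
        simp [τ]
      simp [this]
    have hle : H ≤ MulAction.stabilizer (FreeGroup (Fin 2)) (0 : ℤ) := by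
      apply Subgroup.closure_le _ |>.mpr
      rintro x (rfl | rfl)
      · show φ a • (0:ℤ) = 0
        simp [hφa, π, Equiv.swap_apply_def]
      · show φ (b * (a * b * a⁻¹ * b⁻¹) ^ 3) • (0:ℤ) = 0
        simp only [map_mul, map_pow, map_inv, hφa, hφb]
        show ((τ * (π * τ * π⁻¹ * τ⁻¹) ^ 3) : Equiv.Perm ℤ) 0 = 0
        simp [π, τ, pow_succ, Equiv.Perm.mul_apply, Equiv.swap_apply_def, mul_inv_rev,
          Equiv.Perm.inv_def]
    have horb : MulAction.orbit (FreeGroup (Fin 2)) (0 : ℤ) = Set.univ := by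
      rw [Set.eq_univ_iff_forall]
      intro n
      refine ⟨b ^ n, ?_⟩
      show φ (b ^ n) • (0:ℤ) = n
      rw [map_zpow, hφb]
      show (τ ^ n) 0 = n
      rw [hτn]; ring
    have hstab : (MulAction.stabilizer (FreeGroup (Fin 2)) (0 : ℤ)).index = 0 := by
      rw [MulAction.index_stabilizer, horb, Set.ncard_univ]
      exact Nat.card_eq_zero_of_infinite
    have := Subgroup.index_dvd_of_le hle
    rwa [hstab, zero_dvd_iff] at this
  · -- full abelianization
    have hmap : H.map α = Subgroup.closure {α a, α (b * (a * b * a⁻¹ * b⁻¹) ^ 3)} := by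
      rw [MonoidHom.map_closure]
      congr 1
      simp [Set.image_insert_eq]
    have hαa : α a = Multiplicative.ofAdd ((1, 0) : ℤ × ℤ) := by simp [α, a]
    have hαb : α b = Multiplicative.ofAdd ((0, 1) : ℤ × ℤ) := by simp [α, b]
    have hcomm : ∀ x y : Multiplicative (ℤ × ℤ), x * y * x⁻¹ * y⁻¹ = 1 := by
      intro x y; rw [mul_comm x y]; group
    have hαw : α (b * (a * b * a⁻¹ * b⁻¹) ^ 3) = Multiplicative.ofAdd ((0, 1) : ℤ × ℤ) := by
      rw [map_mul, map_pow, map_mul, map_mul, map_mul, map_inv, map_inv, hcomm]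
      simp [hαb]
    rw [hmap, hαa, hαw]
    rw [eq_top_iff]
    intro x _
    have h1 : Multiplicative.ofAdd ((1, 0) : ℤ × ℤ) ∈
        (Subgroup.closure {Multiplicative.ofAdd ((1,0):ℤ×ℤ), Multiplicative.ofAdd ((0,1):ℤ×ℤ)} :
          Subgroup (Multiplicative (ℤ×ℤ))) :=
      Subgroup.subset_closure (Set.mem_insert _ _)
    have h2 : Multiplicative.ofAdd ((0, 1) : ℤ × ℤ) ∈
        (Subgroup.closure {Multiplicative.ofAdd ((1,0):ℤ×ℤ), Multiplicative.ofAdd ((0,1):ℤ×ℤ)} :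
          Subgroup (Multiplicative (ℤ×ℤ))) :=
      Subgroup.subset_closure (Set.mem_insert_of_mem _ rfl)
    have hx : x = (Multiplicative.ofAdd ((1, 0) : ℤ × ℤ)) ^ (x.toAdd.1) *
        (Multiplicative.ofAdd ((0, 1) : ℤ × ℤ)) ^ (x.toAdd.2) := by
      apply Multiplicative.toAdd.injective
      simp [Prod.ext_iff]
    rw [hx]
    exact Subgroup.mul_mem _ (Subgroup.zpow_mem _ h1 _) (Subgroup.zpow_mem _ h2 _)
end
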